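/- arXiv:1204.6244 — 11 statements merged into one kernel-verified Lean document; each statement's English description precedes it below -/
import Mathlib

section
/- Let (G,[·,·],α) be a Hom-Lie superalgebra over a field K of characteristic zero and let β : G → G be an even linear map satisfying β([x,y]) = [β(x),β(y)] for all x,y ∈ G. Then (G,[·,·]_β, β∘α), where [x,y]_β := β([x,y]), is again a Hom-Lie superalgebra. -/
/-- A Hom-Lie superalgebra structure on a `ℤ₂`-graded vector space `G` with grading `Gr`,
bracket `br` and twist map `α`: the bracket is bilinear and even, `α` is linear and even,
the bracket is super skew-symmetric and the super Hom-Jacobi identity holds. -/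
def IsHomLieSuper {K G : Type*} [Field K] [AddCommGroup G] [Module K G]
    (Gr : ZMod 2 → Submodule K G) (br : G → G → G) (α : G → G) : Prop :=
  IsLinearMap K α ∧
  (∀ x : G, IsLinearMap K (br x)) ∧
  (∀ y : G, IsLinearMap K fun x => br x y) ∧
  (∀ i j : ZMod 2, ∀ x ∈ Gr i, ∀ y ∈ Gr j, br x y ∈ Gr (i + j)) ∧
  (∀ i : ZMod 2, ∀ x ∈ Gr i, α x ∈ Gr i) ∧
  (∀ i j : ZMod 2, ∀ x ∈ Gr i, ∀ y ∈ Gr j,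
      br x y = (-((-1 : K) ^ (i.val * j.val))) • br y x) ∧
  (∀ i j l : ZMod 2, ∀ x ∈ Gr i, ∀ y ∈ Gr j, ∀ z ∈ Gr l,
      ((-1 : K) ^ (i.val * l.val)) • br (α x) (br y z) +
      ((-1 : K) ^ (l.val * j.val)) • br (α z) (br x y) +
      ((-1 : K) ^ (j.val * i.val)) • br (α y) (br z x) = 0)

/-- If `(G, [·,·], α)` is a Hom-Lie superalgebra and `β` is an even linear map
with `β [x,y] = [β x, β y]`, then `(G, β ∘ [·,·], β ∘ α)` is again a Hom-Lie superalgebra. -/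
theorem twist_isHomLieSuper
    (K G : Type*) [Field K] [CharZero K] [AddCommGroup G] [Module K G]
    (Gr : ZMod 2 → Submodule K G) (hGr : DirectSum.IsInternal Gr)
    (br : G → G → G) (α : G → G)
    (hHL : IsHomLieSuper Gr br α)
    (β : G → G) (hβlin : IsLinearMap K β)
    (hβeven : ∀ i : ZMod 2, ∀ x ∈ Gr i, β x ∈ Gr i)
    (hβmor : ∀ x y : G, β (br x y) = br (β x) (β y)) :
    IsHomLieSuper Gr (fun x y => β (br x y)) (β ∘ α) := by
  obtain ⟨hαlin, hbr1, hbr2, hbrgr, hαev, hskew, hjac⟩ := hHL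
  refine ⟨?_, ?_, ?_, ?_, ?_, ?_, ?_⟩
  · exact ⟨fun a b => by simp [Function.comp, hαlin.map_add, hβlin.map_add],
      fun c a => by simp [Function.comp, hαlin.map_smul, hβlin.map_smul]⟩
  · exact fun x => ⟨fun a b => by simp [(hbr1 x).map_add, hβlin.map_add],
      fun c a => by simp [(hbr1 x).map_smul, hβlin.map_smul]⟩
  · exact fun y => ⟨fun a b => by simp [(hbr2 y).map_add, hβlin.map_add],
      fun c a => by simp [(hbr2 y).map_smul, hβlin.map_smul]⟩
  · exact fun i j x hx y hy => hβeven _ _ (hbrgr i j x hx y hy)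
  · exact fun i x hx => hβeven _ _ (hαev i x hx)
  · intro i j x hx y hy
    simp only [hskew i j x hx y hy, hβlin.map_smul]
  · intro i j l x hx y hy z hz
    have key : ∀ a b : G, β (br ((β ∘ α) a) (β (br b z))) = β (β (br (α a) (br b z))) := by
      intro a b; simp [Function.comp, hβmor]
    simp only [Function.comp, ← hβmor, ← hβlin.map_smul, ← hβlin.map_add]
    rw [hjac i j l x hx y hy z hz, hβlin.map_zero, hβlin.map_zero]
end

section
/- Let (G,[·,·]) be a Lie superalgebra over a field K of characteristic zero and let θ : G → G be an even linear map in the centroid, i.e. θ([x,y]) = [θ(x),y] for all x,y ∈ G. Then (G,{·,·},θ), where {x,y} := θ([x,y]), is a Hom-Lie superalgebra. -/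
/-- A Lie superalgebra structure: even bilinear bracket, super skew-symmetric,
satisfying the super Jacobi identity. -/
def IsLieSuper {K G : Type*} [Field K] [AddCommGroup G] [Module K G]
    (Gr : ZMod 2 → Submodule K G) (br : G → G → G) : Prop :=
  (∀ x : G, IsLinearMap K (br x)) ∧
  (∀ y : G, IsLinearMap K fun x => br x y) ∧
  (∀ i j : ZMod 2, ∀ x ∈ Gr i, ∀ y ∈ Gr j, br x y ∈ Gr (i + j)) ∧
  (∀ i j : ZMod 2, ∀ x ∈ Gr i, ∀ y ∈ Gr j,
      br x y = (-((-1 : K) ^ (i.val * j.val))) • br y x) ∧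
  (∀ i j l : ZMod 2, ∀ x ∈ Gr i, ∀ y ∈ Gr j, ∀ z ∈ Gr l,
      ((-1 : K) ^ (i.val * l.val)) • br x (br y z) +
      ((-1 : K) ^ (l.val * j.val)) • br z (br x y) +
      ((-1 : K) ^ (j.val * i.val)) • br y (br z x) = 0)

/-- If `(G,[·,·])` is a Lie superalgebra and `θ` is an even linear element of
the centroid (`θ [x,y] = [θ x, y]`), then `(G, θ ∘ [·,·], θ)` is a Hom-Lie superalgebra. -/
theorem centroid_isHomLieSuper
    (K G : Type*) [Field K] [CharZero K] [AddCommGroup G] [Module K G]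
    (Gr : ZMod 2 → Submodule K G) (hGr : DirectSum.IsInternal Gr)
    (br : G → G → G) (hL : IsLieSuper Gr br)
    (θ : G → G) (hθlin : IsLinearMap K θ)
    (hθeven : ∀ i : ZMod 2, ∀ x ∈ Gr i, θ x ∈ Gr i)
    (hθcent : ∀ x y : G, θ (br x y) = br (θ x) y) :
    IsHomLieSuper Gr (fun x y => θ (br x y)) θ := by
  obtain ⟨hbr1, hbr2, hgrade, hskew, hjac⟩ := hL
  -- θ moves to the second argument on homogeneous elements
  have key : ∀ i j : ZMod 2, ∀ x ∈ Gr i, ∀ y ∈ Gr j, θ (br x y) = br x (θ y) := by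
    intro i j x hx y hy
    have h1 := hskew i j x hx y hy
    have h2 := hskew j i (θ y) (hθeven j y hy) x hx
    rw [h1, hθlin.map_smul, hθcent, h2, smul_smul]
    have : -(-1 : K) ^ (i.val * j.val) * -(-1 : K) ^ (j.val * i.val) = 1 := by
      rw [Nat.mul_comm j.val i.val]
      rcases neg_one_pow_eq_or K (i.val * j.val) with h | h <;> rw [h] <;> norm_num
    rw [this, one_smul]
  refine ⟨hθlin, ?_, ?_, ?_, hθeven, ?_, ?_⟩
  · intro x
    exact ⟨fun a b => by simp [(hbr1 x).map_add, hθlin.map_add],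
           fun c a => by simp [(hbr1 x).map_smul, hθlin.map_smul]⟩
  · intro y
    exact ⟨fun a b => by simp [(hbr2 y).map_add, hθlin.map_add],
           fun c a => by simp [(hbr2 y).map_smul, hθlin.map_smul]⟩
  · intro i j x hx y hy
    exact hθeven _ _ (hgrade i j x hx y hy)
  · intro i j x hx y hy
    simp only [hskew i j x hx y hy, hθlin.map_smul]
  · intro i j l x hx y hy z hz
    have hx' := hθeven i x hx
    have hy' := hθeven j y hy
    have hz' := hθeven l z hz
    have hyz := hgrade j l y hy z hz
    have hxy := hgrade i j x hx y hy
    have hzx := hgrade l i z hz x hx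
    have e1 : θ (br (θ x) (θ (br y z))) = θ (θ (θ (br x (br y z)))) := by
      rw [← key i (j+l) (θ x) hx' (br y z) hyz, ← hθcent x (br y z)]
    have e2 : θ (br (θ z) (θ (br x y))) = θ (θ (θ (br z (br x y)))) := by
      rw [← key l (i+j) (θ z) hz' (br x y) hxy, ← hθcent z (br x y)]
    have e3 : θ (br (θ y) (θ (br z x))) = θ (θ (θ (br y (br z x)))) := by
      rw [← key j (l+i) (θ y) hy' (br z x) hzx, ← hθcent y (br z x)]
    simp only [e1, e2, e3, ← hθlin.map_smul, ← hθlin.map_add]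
    rw [hjac i j l x hx y hy z hz]
    simp [hθlin.map_zero]
end

section
/- Let (G,[·,·],α) be a multiplicative Hom-Lie superalgebra, let k ≥ −1 be an integer, and let a ∈ G be a homogeneous element with α(a) = a. Then the map ad_k(a) : G → G defined by ad_k(a)(x) = [a, α^k(x)] is an α^{k+1}-derivation of G of parity |a|, i.e. α∘ad_k(a) = ad_k(a)∘α and ad_k(a)([x,y]) = [ad_k(a)(x), α^{k+1}(y)] + (−1)^{|x||a|}[α^{k+1}(x), ad_k(a)(y)] for all homogeneous x,y ∈ G. -/
/-- The `k`-th power of `α` for `k : ℤ`, with the conventions `α^(-1) = 0` (indeed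
`α^k = 0` for all negative `k`) and `α^0 = id`. -/
def itZ {G : Type*} [Zero G] (α : G → G) (k : ℤ) : G → G :=
  if k < 0 then (fun _ => 0) else α^[k.toNat]

/-!
With `α a = a`, the super Hom-Jacobi identity for `(a, x, y)`, after super skew-symmetry is
used to bring `a` to the left of each bracket, is exactly the Leibniz rule
`[a, [x, y]] = [[a, x], α y] + (-1)^{|x||a|} [α x, [a, y]]`, i.e. `ad_0(a)` is an
`α`-derivation. For `k ≥ 0` multiplicativity gives `α^k [x, y] = [α^k x, α^k y]`, so the claim for
`ad_k(a)` is this Leibniz rule applied to `α^k x` and `α^k y`; for `k < 0` both sides vanish.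
-/

lemma neg_one_pow_val_mul_val_add (K : Type*) [Ring K] (u v w : ZMod 2) :
    (-1 : K) ^ (w.val * (u + v).val) = (-1) ^ (w.val * u.val) * (-1) ^ (w.val * v.val) := by
  rw [← pow_add]
  exact neg_one_pow_congr (by fin_cases u <;> fin_cases v <;> fin_cases w <;> decide)

lemma neg_one_pow_mul_self (K : Type*) [Ring K] (n : ℕ) : (-1 : K) ^ n * (-1) ^ n = 1 := by
  rw [← pow_add, ← two_mul, pow_mul, neg_one_sq, one_pow]

lemma itZ_natCast {G : Type*} [Zero G] (α : G → G) (n : ℕ) : itZ α n = α^[n] := by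
  simp [itZ]

lemma itZ_of_neg {G : Type*} [Zero G] (α : G → G) {k : ℤ} (hk : k < 0) (x : G) :
    itZ α k x = 0 := by
  simp [itZ, hk]

namespace IsHomLieSuper

variable {K G : Type*} [Field K] [AddCommGroup G] [Module K G]
  {Gr : ZMod 2 → Submodule K G} {br : G → G → G} {α : G → G}
  {i j p : ZMod 2} {a x y z : G}

theorem map_zero (h : IsHomLieSuper Gr br α) : α 0 = 0 :=
  h.1.map_zero

theorem br_zero_right (h : IsHomLieSuper Gr br α) (x : G) : br x 0 = 0 :=
  (h.2.1 x).map_zero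

theorem br_zero_left (h : IsHomLieSuper Gr br α) (y : G) : br 0 y = 0 :=
  (h.2.2.1 y).map_zero

theorem br_smul_right (h : IsHomLieSuper Gr br α) (c : K) (x y : G) :
    br x (c • y) = c • br x y :=
  (h.2.1 x).map_smul c y

theorem br_mem (h : IsHomLieSuper Gr br α) (hx : x ∈ Gr i) (hy : y ∈ Gr j) :
    br x y ∈ Gr (i + j) :=
  h.2.2.2.1 i j x hx y hy

theorem map_mem (h : IsHomLieSuper Gr br α) (hx : x ∈ Gr i) : α x ∈ Gr i :=
  h.2.2.2.2.1 i x hx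

theorem iterate_mem (h : IsHomLieSuper Gr br α) (n : ℕ) (hx : x ∈ Gr i) : α^[n] x ∈ Gr i :=
  Set.MapsTo.iterate (fun _ => h.map_mem) n hx

theorem br_comm (h : IsHomLieSuper Gr br α) (hx : x ∈ Gr i) (hy : y ∈ Gr j) :
    br x y = (-((-1 : K) ^ (i.val * j.val))) • br y x :=
  h.2.2.2.2.2.1 i j x hx y hy

theorem jacobi (h : IsHomLieSuper Gr br α) (hx : x ∈ Gr i) (hy : y ∈ Gr j) (hz : z ∈ Gr p) :
    ((-1 : K) ^ (i.val * p.val)) • br (α x) (br y z) +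
      ((-1 : K) ^ (p.val * j.val)) • br (α z) (br x y) +
      ((-1 : K) ^ (j.val * i.val)) • br (α y) (br z x) = 0 :=
  h.2.2.2.2.2.2 i j p x hx y hy z hz

theorem leibniz_of_map_eq_self (h : IsHomLieSuper Gr br α) (ha : a ∈ Gr p) (hαa : α a = a)
    (hx : x ∈ Gr i) (hy : y ∈ Gr j) :
    br a (br x y) = br (br a x) (α y) + (-1 : K) ^ (i.val * p.val) • br (α x) (br a y) := by
  have J := h.jacobi ha hx hy
  rw [hαa, h.br_comm (h.map_mem hy) (h.br_mem ha hx), h.br_comm hy ha, h.br_smul_right,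
    neg_one_pow_val_mul_val_add, mul_comm p.val j.val] at J
  -- multiplying by `s = (-1)^{|y||a|}` clears the sign of the `[a, [x, y]]` term
  set s : K := (-1) ^ (j.val * p.val)
  have hs : s * s = 1 := neg_one_pow_mul_self K _
  have ht := neg_one_pow_mul_self K (j.val * i.val)
  linear_combination (norm := module)
    s • J + hs • (br (br a x) (α y) + (-1 : K) ^ (i.val * p.val) • br (α x) (br a y) -
      br a (br x y)) + (s * s) • ht • br (br a x) (α y)

end IsHomLieSuper

theorem ad_isAlphaDerivation_general
    (K G : Type*) [Field K] [AddCommGroup G] [Module K G]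
    (Gr : ZMod 2 → Submodule K G)
    (br : G → G → G) (α : G → G) (hHL : IsHomLieSuper Gr br α)
    (hmult : ∀ x y : G, α (br x y) = br (α x) (α y))
    (k : ℤ)
    (p : ZMod 2) (a : G) (ha : a ∈ Gr p) (hαa : α a = a) :
    (∀ x : G, α (br a (itZ α k x)) = br a (itZ α k (α x))) ∧
    (∀ i : ZMod 2, ∀ x ∈ Gr i, br a (itZ α k x) ∈ Gr (i + p)) ∧
    (∀ (i j : ZMod 2), ∀ x ∈ Gr i, ∀ y ∈ Gr j,
        br a (itZ α k (br x y)) =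
          br (br a (itZ α k x)) (itZ α (k + 1) y) +
            ((-1 : K) ^ (i.val * p.val)) • br (itZ α (k + 1) x) (br a (itZ α k y))) := by
  by_cases hneg : k < 0
  · simp [itZ_of_neg α hneg, hHL.br_zero_right, hHL.br_zero_left, hHL.map_zero]
  obtain ⟨n, rfl⟩ := Int.eq_ofNat_of_zero_le (not_lt.mp hneg)
  rw [show (n : ℤ) + 1 = ((n + 1 : ℕ) : ℤ) by push_cast; rfl, itZ_natCast, itZ_natCast]
  refine ⟨fun x => ?_, fun i x hx => ?_, fun i j x hx y hy => ?_⟩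
  · rw [hmult, hαa, Function.Commute.self_iterate α n x]
  · rw [add_comm]
    exact hHL.br_mem ha (hHL.iterate_mem n hx)
  · rw [(Function.Semiconj₂.iterate hmult n).eq, Function.iterate_succ_apply',
      Function.iterate_succ_apply']
    exact hHL.leibniz_of_map_eq_self ha hαa (hHL.iterate_mem n hx) (hHL.iterate_mem n hy)

/-- In a multiplicative Hom-Lie superalgebra, for a homogeneous `a` of parity
`p` with `α a = a`, the map `ad_k(a) : x ↦ [a, α^k x]` commutes with `α`, is homogeneous of
parity `p`, and is an `α^(k+1)`-derivation. -/
theorem ad_isAlphaDerivation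
    (K G : Type*) [Field K] [CharZero K] [AddCommGroup G] [Module K G]
    (Gr : ZMod 2 → Submodule K G) (hGr : DirectSum.IsInternal Gr)
    (br : G → G → G) (α : G → G) (hHL : IsHomLieSuper Gr br α)
    (hmult : ∀ x y : G, α (br x y) = br (α x) (α y))
    (k : ℤ) (hk : -1 ≤ k)
    (p : ZMod 2) (a : G) (ha : a ∈ Gr p) (hαa : α a = a) :
    (∀ x : G, α (br a (itZ α k x)) = br a (itZ α k (α x))) ∧
    (∀ i : ZMod 2, ∀ x ∈ Gr i, br a (itZ α k x) ∈ Gr (i + p)) ∧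
    (∀ (i j : ZMod 2), ∀ x ∈ Gr i, ∀ y ∈ Gr j,
        br a (itZ α k (br x y)) =
          br (br a (itZ α k x)) (itZ α (k + 1) y) +
            ((-1 : K) ^ (i.val * p.val)) • br (itZ α (k + 1) x) (br a (itZ α k y))) :=
  ad_isAlphaDerivation_general K G Gr br α hHL hmult k p a ha hαa
end

section
/- Let (G,[·,·],α) be a Hom-Lie superalgebra and let D₁, D₂, D₃ : G → G be homogeneous linear maps (of parities |D₁|,|D₂|,|D₃|) each commuting with α. With the graded commutator [D,D'] := D∘D' − (−1)^{|D||D'|}D'∘D and the twisting map α̃(D) := α∘D, the super Hom-Jacobi identity holds: (−1)^{|D₁||D₃|}[α̃(D₁),[D₂,D₃]] + (−1)^{|D₃||D₂|}[α̃(D₃),[D₁,D₂]] + (−1)^{|D₂||D₁|}[α̃(D₂),[D₃,D₁]] = 0. In particular, the space of derivations of G equipped with the graded commutator and α̃ is a Hom-Lie superalgebra. -/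
/-- The graded commutator `[D,D'] = D ∘ D' - (-1)^{|D||D'|} D' ∘ D` of two homogeneous maps
of parities `p`, `p'`. -/
def gradedComm (K : Type*) {G : Type*} [Field K] [AddCommGroup G] [Module K G]
    (D D' : G → G) (p p' : ZMod 2) : G → G :=
  fun x => D (D' x) - ((-1 : K) ^ (p.val * p'.val)) • D' (D x)

/-- For homogeneous linear maps `D₁, D₂, D₃` commuting with `α`, the graded
commutator together with the twist `α̃(D) = α ∘ D` satisfies the super Hom-Jacobi identity;
in particular the derivations of `G` form a Hom-Lie superalgebra. -/
theorem derivations_homJacobi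
    (K G : Type*) [Field K] [CharZero K] [AddCommGroup G] [Module K G]
    (Gr : ZMod 2 → Submodule K G) (hGr : DirectSum.IsInternal Gr)
    (br : G → G → G) (α : G → G) (hHL : IsHomLieSuper Gr br α)
    (D₁ D₂ D₃ : G → G) (p₁ p₂ p₃ : ZMod 2)
    (h₁ : IsLinearMap K D₁) (h₂ : IsLinearMap K D₂) (h₃ : IsLinearMap K D₃)
    (hp₁ : ∀ i : ZMod 2, ∀ x ∈ Gr i, D₁ x ∈ Gr (i + p₁))
    (hp₂ : ∀ i : ZMod 2, ∀ x ∈ Gr i, D₂ x ∈ Gr (i + p₂))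
    (hp₃ : ∀ i : ZMod 2, ∀ x ∈ Gr i, D₃ x ∈ Gr (i + p₃))
    (hc₁ : ∀ x, α (D₁ x) = D₁ (α x))
    (hc₂ : ∀ x, α (D₂ x) = D₂ (α x))
    (hc₃ : ∀ x, α (D₃ x) = D₃ (α x)) :
    ∀ x : G,
      ((-1 : K) ^ (p₁.val * p₃.val)) •
          gradedComm K (α ∘ D₁) (gradedComm K D₂ D₃ p₂ p₃) p₁ (p₂ + p₃) x +
      ((-1 : K) ^ (p₃.val * p₂.val)) •
          gradedComm K (α ∘ D₃) (gradedComm K D₁ D₂ p₁ p₂) p₃ (p₁ + p₂) x +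
      ((-1 : K) ^ (p₂.val * p₁.val)) •
          gradedComm K (α ∘ D₂) (gradedComm K D₃ D₁ p₃ p₁) p₂ (p₃ + p₁) x = 0 := by
  intro x
  have hα := hHL.1
  have e1s := h₁.map_sub
  have e2s := h₂.map_sub
  have e3s := h₃.map_sub
  have e1m := h₁.map_smul
  have e2m := h₂.map_smul
  have e3m := h₃.map_smul
  have eas := hα.map_sub
  have eam := hα.map_smul
  rcases ((show ∀ p : ZMod 2, p = 0 ∨ p = 1 by decide) p₁) with rfl | rfl <;>
  rcases ((show ∀ p : ZMod 2, p = 0 ∨ p = 1 by decide) p₂) with rfl | rfl <;>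
  rcases ((show ∀ p : ZMod 2, p = 0 ∨ p = 1 by decide) p₃) with rfl | rfl <;>
    simp only [gradedComm, Function.comp_apply, e1s, e2s, e3s, e1m, e2m, e3m, eas, eam,
      ← hc₁, ← hc₂, ← hc₃] <;>
    norm_num [ZMod.val_one, ZMod.val_zero, show ((1:ZMod 2)+1).val = 0 from rfl, show ((1:ZMod 2)+0).val = 1 from rfl,
      show ((0:ZMod 2)+1).val = 1 from rfl, show ((0:ZMod 2)+0).val = 0 from rfl, show ((2:ZMod 2)).val = 0 from rfl] <;>
    abel
end

section
/- Let (G,[·,·],α) be a Hom-Lie superalgebra over K and let D : G → G be an even linear map. Consider the superspace G̃ = G ⊕ K·D with grading G̃₀ = G₀ ⊕ K·D, G̃₁ = G₁, the bracket [g+γD, h+λD]_D := [g,h] − λD(g) + γD(h) for g,h ∈ G and γ,λ ∈ K, and the even map α_D(g+λD) := α(g)+λD. Then (G̃,[·,·]_D,α_D) is a Hom-Lie superalgebra if and only if D([x,y]) = [D(x),α(y)] + [α(x),D(y)] for all homogeneous x,y ∈ G (i.e. D satisfies the α¹-derivation identity). -/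
/-- The one-dimensional extension `G̃ = G ⊕ K·D` (modelled as `G × K`, where
`(g, γ)` stands for `g + γ D`), with grading `G̃₀ = G₀ ⊕ K`, `G̃₁ = G₁`, bracket
`[g+γD, h+λD] = [g,h] - λ D(g) + γ D(h)` and twist `α_D(g+λD) = α(g) + λD`, is a Hom-Lie
superalgebra if and only if `D` satisfies the `α¹`-derivation identity
`D [x,y] = [D x, α y] + [α x, D y]` on homogeneous elements. -/
theorem extension_isHomLieSuper_iff_derivation
    (K G : Type*) [Field K] [CharZero K] [AddCommGroup G] [Module K G]
    (Gr : ZMod 2 → Submodule K G) (hGr : DirectSum.IsInternal Gr)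
    (br : G → G → G) (α : G → G) (hHL : IsHomLieSuper Gr br α)
    (D : G → G) (hDlin : IsLinearMap K D)
    (hDeven : ∀ i : ZMod 2, ∀ x ∈ Gr i, D x ∈ Gr i) :
    IsHomLieSuper
        (fun i : ZMod 2 =>
          if i = 0 then (Gr 0).prod (⊤ : Submodule K K)
          else (Gr 1).prod (⊥ : Submodule K K))
        (fun u v => (br u.1 v.1 - v.2 • D u.1 + u.2 • D v.1, (0 : K)))
        (fun u => (α u.1, u.2)) ↔
      (∀ (i j : ZMod 2), ∀ x ∈ Gr i, ∀ y ∈ Gr j,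
        D (br x y) = br (D x) (α y) + br (α x) (D y)) := by
  obtain ⟨hα, hbr2, hbr1, hgrade, hαe, hskew, hjac⟩ := hHL
  have v0 : (0 : ZMod 2).val = 0 := rfl
  have v1 : (1 : ZMod 2).val = 1 := rfl
  have hz2 : ∀ i : ZMod 2, i = 0 ∨ i = 1 := by decide
  have hb0r : ∀ a, br a 0 = 0 := fun a => (hbr2 a).map_zero
  have hb0l : ∀ a, br 0 a = 0 := fun a => (hbr1 a).map_zero
  have hbadd : ∀ a b c, br a (b + c) = br a b + br a c := fun a b c => (hbr2 a).map_add b c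
  have hbsub : ∀ a b c, br a (b - c) = br a b - br a c := fun a b c => (hbr2 a).map_sub b c
  have hbsmul : ∀ a (c : K) b, br a (c • b) = c • br a b := fun a c b => (hbr2 a).map_smul c b
  have hbneg : ∀ a b, br a (-b) = -br a b := fun a b => (hbr2 a).map_neg b
  have hbadd' : ∀ a b c, br (a + b) c = br a c + br b c := fun a b c => (hbr1 c).map_add a b
  have hbsmul' : ∀ (c : K) a b, br (c • a) b = c • br a b := fun c a b => (hbr1 b).map_smul c a
  have hD0 : D 0 = 0 := hDlin.map_zero
  have hDadd : ∀ a b, D (a + b) = D a + D b := hDlin.map_add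
  have hDsub : ∀ a b, D (a - b) = D a - D b := hDlin.map_sub
  have hDsmul : ∀ (c : K) a, D (c • a) = c • D a := hDlin.map_smul
  have hα0 : α 0 = 0 := hα.map_zero
  have hL1 : ∀ (p q : ZMod 2),
      (∀ (i j : ZMod 2), ∀ x ∈ Gr i, ∀ y ∈ Gr j,
        D (br x y) = br (D x) (α y) + br (α x) (D y)) →
      ∀ a ∈ Gr p, ∀ b ∈ Gr q,
      D (br a b) - br (α a) (D b) + ((-1 : K) ^ (q.val * p.val)) • br (α b) (D a) = 0 := by
    intro p q hder a ha b hb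
    have hd := hder p q a ha b hb
    have hs := hskew p q (D a) (hDeven p a ha) (α b) (hαe q b hb)
    rw [hd, hs, Nat.mul_comm q.val p.val]
    module
  constructor
  · -- extension Hom-Lie ⇒ derivation identity
    intro hExt
    obtain ⟨-, -, -, -, -, -, hjac'⟩ := hExt
    intro i j x hx y hy
    have m : ∀ (p : ZMod 2) (a : G), a ∈ Gr p →
        (a, (0:K)) ∈ (if p = 0 then (Gr 0).prod (⊤ : Submodule K K)
            else (Gr 1).prod (⊥ : Submodule K K)) := by
      intro p a ha
      rcases hz2 p with rfl | rfl <;> simp [Submodule.mem_prod, ha]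
    have mD : ((0:G), (1:K)) ∈ (if (0 : ZMod 2) = 0 then (Gr 0).prod (⊤ : Submodule K K)
        else (Gr 1).prod (⊥ : Submodule K K)) := by
      simp [Submodule.mem_prod, Submodule.zero_mem]
    have hJ := hjac' i j 0 (x, 0) (m i x hx) (y, 0) (m j y hy) ((0:G), (1:K)) mD
    simp only [hb0r, hb0l, hD0, hα0, one_smul, zero_smul, smul_zero, sub_zero, zero_sub,
      add_zero, zero_add, v0, Nat.mul_zero, Nat.zero_mul, pow_zero, hbneg,
      Prod.smul_mk, Prod.mk_add_mk, Prod.mk_eq_zero] at hJ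
    have hJ1 := hJ.1
    have hs := hskew i j (D x) (hDeven i x hx) (α y) (hαe j y hy)
    rw [Nat.mul_comm i.val j.val] at hs
    linear_combination (norm := module) hJ1 - hs
  · -- derivation identity ⇒ extension Hom-Lie
    intro hder
    have h1 : ∀ (p q : ZMod 2), ∀ a ∈ Gr p, ∀ b ∈ Gr q,
        D (br a b) - br (α a) (D b) + ((-1 : K) ^ (q.val * p.val)) • br (α b) (D a) = 0 :=
      fun p q => hL1 p q hder
    refine ⟨?_, ?_, ?_, ?_, ?_, ?_, ?_⟩
    · exact ⟨fun u v => by simp [Prod.ext_iff, hα.map_add], fun c u => by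
        simp [Prod.ext_iff, hα.map_smul]⟩
    · intro u
      constructor
      · intro a b
        refine Prod.ext ?_ (by simp)
        simp only [Prod.fst_add, Prod.snd_add, hbadd, hDadd, add_smul, smul_add]
        module
      · intro c a
        refine Prod.ext ?_ (by simp)
        simp only [Prod.smul_fst, Prod.smul_snd, hbsmul, hDsmul, smul_eq_mul, mul_smul]
        module
    · intro v
      constructor
      · intro a b
        refine Prod.ext ?_ (by simp)
        simp only [Prod.fst_add, Prod.snd_add, hbadd', hDadd, add_smul, smul_add]
        module
      · intro c a
        refine Prod.ext ?_ (by simp)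
        simp only [Prod.smul_fst, Prod.smul_snd, hbsmul', hDsmul, smul_eq_mul, mul_smul]
        module
    · -- grading
      intro i j u hu v hv
      obtain ⟨x, g⟩ := u; obtain ⟨y, lm⟩ := v
      rcases hz2 i with rfl | rfl <;> rcases hz2 j with rfl | rfl <;>
        simp only [reduceIte, Submodule.mem_prod, Submodule.mem_bot] at hu hv
      · obtain ⟨hx, -⟩ := hu; obtain ⟨hy, -⟩ := hv
        have e : (0 : ZMod 2) + 0 = 0 := rfl
        simp only [e, reduceIte, Submodule.mem_prod, Submodule.mem_top, and_true]
        exact add_mem (sub_mem (hgrade 0 0 x hx y hy)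
          (Submodule.smul_mem _ _ (hDeven 0 x hx))) (Submodule.smul_mem _ _ (hDeven 0 y hy))
      · obtain ⟨hx, -⟩ := hu; obtain ⟨hy, rfl⟩ := hv
        have e : (0 : ZMod 2) + 1 = 1 := rfl
        simp only [e, reduceIte, Submodule.mem_prod, Submodule.mem_bot]
        refine ⟨add_mem (sub_mem ?_ (by simp)) (Submodule.smul_mem _ _ (hDeven 1 y hy)), rfl⟩
        exact hgrade 0 1 x hx y hy
      · obtain ⟨hx, rfl⟩ := hu; obtain ⟨hy, -⟩ := hv
        have e : (1 : ZMod 2) + 0 = 1 := rfl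
        simp only [e, reduceIte, Submodule.mem_prod, Submodule.mem_bot]
        refine ⟨add_mem (sub_mem ?_ (Submodule.smul_mem _ _ (hDeven 1 x hx))) (by simp), rfl⟩
        exact hgrade 1 0 x hx y hy
      · obtain ⟨hx, rfl⟩ := hu; obtain ⟨hy, rfl⟩ := hv
        have e : (1 : ZMod 2) + 1 = 0 := rfl
        simp only [e, reduceIte, Submodule.mem_prod, Submodule.mem_top, and_true]
        exact add_mem (sub_mem (hgrade 1 1 x hx y hy) (by simp)) (by simp)
    · -- α even
      intro i u hu
      obtain ⟨x, g⟩ := u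
      rcases hz2 i with rfl | rfl <;>
        simp only [reduceIte, Submodule.mem_prod, Submodule.mem_bot] at hu ⊢
      · exact ⟨hαe 0 x hu.1, hu.2⟩
      · exact ⟨hαe 1 x hu.1, hu.2⟩
    · -- skew-symmetry
      intro i j u hu v hv
      obtain ⟨x, g⟩ := u; obtain ⟨y, lm⟩ := v
      rcases hz2 i with rfl | rfl <;> rcases hz2 j with rfl | rfl <;>
          simp only [reduceIte, Submodule.mem_prod, Submodule.mem_bot] at hu hv <;>
          obtain ⟨hx, hg⟩ := hu <;> obtain ⟨hy, hl⟩ := hv <;>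
          (try subst hg) <;> (try subst hl) <;>
          refine Prod.ext ?_ (by simp)
      · have hs := hskew 0 0 x hx y hy
        simp only [v0, v1, Nat.mul_zero, Nat.zero_mul, Nat.mul_one, Nat.one_mul, pow_zero,
          pow_one, one_smul, zero_smul, sub_zero, add_zero, zero_add, smul_zero,
          Prod.smul_fst, Prod.smul_mk] at hs ⊢
        linear_combination (norm := module) hs
      · have hs := hskew 0 1 x hx y hy
        simp only [v0, v1, Nat.mul_zero, Nat.zero_mul, Nat.mul_one, Nat.one_mul, pow_zero,
          pow_one, one_smul, zero_smul, sub_zero, add_zero, zero_add, smul_zero,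
          Prod.smul_fst, Prod.smul_mk] at hs ⊢
        linear_combination (norm := module) hs
      · have hs := hskew 1 0 x hx y hy
        simp only [v0, v1, Nat.mul_zero, Nat.zero_mul, Nat.mul_one, Nat.one_mul, pow_zero,
          pow_one, one_smul, zero_smul, sub_zero, add_zero, zero_add, smul_zero,
          Prod.smul_fst, Prod.smul_mk] at hs ⊢
        linear_combination (norm := module) hs
      · have hs := hskew 1 1 x hx y hy
        simp only [v0, v1, Nat.mul_zero, Nat.zero_mul, Nat.mul_one, Nat.one_mul, pow_zero,
          pow_one, one_smul, zero_smul, sub_zero, add_zero, zero_add, smul_zero,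
          Prod.smul_fst, Prod.smul_mk] at hs ⊢
        linear_combination (norm := module) hs
    · -- Hom-Jacobi
      intro i j l u hu v hv w hw
      obtain ⟨x, g⟩ := u; obtain ⟨y, lm⟩ := v; obtain ⟨z, mu⟩ := w
      rcases hz2 i with rfl | rfl <;> rcases hz2 j with rfl | rfl <;>
          rcases hz2 l with rfl | rfl <;>
        simp only [reduceIte, Submodule.mem_prod, Submodule.mem_top, Submodule.mem_bot]
          at hu hv hw <;>
        obtain ⟨hx, hg⟩ := hu <;> obtain ⟨hy, hl⟩ := hv <;> obtain ⟨hz', hm⟩ := hw <;>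
        (try subst hg) <;> (try subst hl) <;> (try subst hm) <;>
        refine Prod.ext ?_ (by simp) <;>
        (have hj := hjac _ _ _ x hx y hy z hz';
         have ha := h1 _ _ y hy z hz';
         have hb := h1 _ _ z hz' x hx;
         have hc := h1 _ _ x hx y hy;
         simp only [v0, v1, Nat.mul_zero, Nat.zero_mul, Nat.mul_one, Nat.one_mul, pow_zero,
           pow_one, one_smul, zero_smul, sub_zero, add_zero, zero_add, smul_zero,
           hbadd, hbsub, hbsmul, hDadd, hDsub, hDsmul,
           Prod.smul_fst, Prod.smul_mk, Prod.fst_add, Prod.fst_zero] at hj ha hb hc ⊢)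
      · linear_combination (norm := module) hj + g • ha + lm • hb + mu • hc
      · linear_combination (norm := module) hj + g • ha + lm • hb
      · linear_combination (norm := module) hj + g • ha + mu • hc
      · linear_combination (norm := module) hj + g • ha
      · linear_combination (norm := module) hj + lm • hb + mu • hc
      · linear_combination (norm := module) hj + lm • hb
      · linear_combination (norm := module) hj + mu • hc
      · linear_combination (norm := module) hj
end

section
/- Let (G,[·,·],α) be a multiplicative Hom-Lie superalgebra, (V,[·,·]_V,β) a representation of G, and r ≥ 1 an integer. For every homogeneous k-hom-cochain f ∈ C^k_{α,β}(G,V) one has δ^k_r(f)(α(x₀),…,α(x_k)) = β(δ^k_r(f)(x₀,…,x_k)) for all x₀,…,x_k ∈ G; hence δ^k_r maps C^k_{α,β}(G,V) into C^{k+1}_{α,β}(G,V). -/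
/-- A representation `(V, [·,·]_V, β)` of a Hom-Lie superalgebra `(G, br, α)`. -/
def IsRep {K G V : Type*} [Field K] [AddCommGroup G] [Module K G]
    [AddCommGroup V] [Module K V]
    (Gr : ZMod 2 → Submodule K G) (br : G → G → G) (α : G → G)
    (Vgr : ZMod 2 → Submodule K V) (bv : G → V → V) (β : V → V) : Prop :=
  IsLinearMap K β ∧
  (∀ x : G, IsLinearMap K (bv x)) ∧
  (∀ v : V, IsLinearMap K fun x => bv x v) ∧
  (∀ j : ZMod 2, ∀ v ∈ Vgr j, β v ∈ Vgr j) ∧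
  (∀ i j : ZMod 2, ∀ x ∈ Gr i, ∀ v ∈ Vgr j, bv x v ∈ Vgr (i + j)) ∧
  (∀ (x : G) (v : V), bv (α x) (β v) = β (bv x v)) ∧
  (∀ (i j : ZMod 2), ∀ x ∈ Gr i, ∀ y ∈ Gr j, ∀ v : V,
      bv (br x y) (β v) =
        bv (α x) (bv y v) - ((-1 : K) ^ (i.val * j.val)) • bv (α y) (bv x v))

/-- The coboundary operator `δ^k_r` on `k`-cochains.  A `k`-cochain is encoded as a map
`f : (Fin k → ZMod 2) → (Fin k → G) → V`, where `f p x` is the value on the tuple `x` whose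
entries have parities `p`.  Here `αk` stands for `α^{k+r-1}` and `pf` is the parity of `f`. -/
def codiff (K : Type*) {G V : Type*} [Field K] [AddCommGroup G] [Module K G]
    [AddCommGroup V] [Module K V]
    (br : G → G → G) (bv : G → V → V) (αk : G → G) (α : G → G) (pf : ZMod 2) (k : ℕ)
    (f : (Fin k → ZMod 2) → (Fin k → G) → V)
    (p : Fin (k + 1) → ZMod 2) (x : Fin (k + 1) → G) : V :=
  (∑ t : Fin (k + 1), ∑ s : Fin (k + 1),
      if s < t then
        ((-1 : K) ^ ((t : ℕ) + (p t).val *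
            ∑ i ∈ Finset.univ.filter (fun i => s < i ∧ i < t), (p i).val)) •
          f (fun j => if t.succAbove j = s then p s + p t else p (t.succAbove j))
            (fun j => if t.succAbove j = s then br (x s) (x t) else α (x (t.succAbove j)))
      else 0) +
  ∑ s : Fin (k + 1),
      ((-1 : K) ^ ((s : ℕ) + (p s).val *
          (pf.val + ∑ i ∈ Finset.univ.filter (fun i => i < s), (p i).val))) •
        bv (αk (x s)) (f (fun j => p (s.succAbove j)) (fun j => x (s.succAbove j)))

/-- For a multiplicative Hom-Lie superalgebra `G`, a representation `V` and
`r ≥ 1`, the coboundary of a `k`-hom-cochain is again compatible with `α` and `β`: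
`δ^k_r(f)(α x₀, …, α x_k) = β (δ^k_r(f)(x₀, …, x_k))`; hence `δ^k_r` maps
`C^k_{α,β}(G,V)` into `C^{k+1}_{α,β}(G,V)`. -/
theorem codiff_mem_homCochains
    (K G V : Type*) [Field K] [CharZero K] [AddCommGroup G] [Module K G]
    [AddCommGroup V] [Module K V]
    (Gr : ZMod 2 → Submodule K G) (hGr : DirectSum.IsInternal Gr)
    (br : G → G → G) (α : G → G) (hHL : IsHomLieSuper Gr br α)
    (hmult : ∀ x y : G, α (br x y) = br (α x) (α y))
    (Vgr : ZMod 2 → Submodule K V) (hVgr : DirectSum.IsInternal Vgr)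
    (bv : G → V → V) (β : V → V) (hrep : IsRep Gr br α Vgr bv β)
    (r : ℕ) (hr : 1 ≤ r) (k : ℕ) (pf : ZMod 2)
    (f : (Fin k → ZMod 2) → (Fin k → G) → V)
    -- `f` is multilinear
    (hadd : ∀ p x (i : Fin k) (a c : G),
      f p (Function.update x i (a + c)) =
        f p (Function.update x i a) + f p (Function.update x i c))
    (hsmul : ∀ p x (i : Fin k) (c : K) (a : G),
      f p (Function.update x i (c • a)) = c • f p (Function.update x i a))
    -- `f` is super skew-symmetric (in adjacent arguments)
    (hskew : ∀ (p : Fin k → ZMod 2) (x : Fin k → G) (a b : Fin k), (a : ℕ) + 1 = (b : ℕ) →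
      f (p ∘ Equiv.swap a b) (x ∘ Equiv.swap a b) =
        (-((-1 : K) ^ ((p a).val * (p b).val))) • f p x)
    -- `f` is homogeneous of parity `pf`
    (hpar : ∀ p x, (∀ i, x i ∈ Gr (p i)) → f p x ∈ Vgr (pf + ∑ i, p i))
    -- `f` is a hom-cochain: `β ∘ f = f ∘ α`
    (hcompat : ∀ p x, β (f p x) = f p fun i => α (x i)) :
    ∀ (p : Fin (k + 1) → ZMod 2) (x : Fin (k + 1) → G),
      β (codiff K br bv (α^[k + r - 1]) α pf k f p x) =
        codiff K br bv (α^[k + r - 1]) α pf k f p (fun i => α (x i)) := by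
  intro p x
  obtain ⟨hβ, hbv, -, -, -, hβbv, -⟩ := hrep
  let L : V →ₗ[K] V := IsLinearMap.mk' β hβ
  have hL : ∀ v, β v = L v := fun _ => rfl
  unfold codiff
  rw [hL, map_add, map_sum, map_sum]
  congr 1
  · apply Finset.sum_congr rfl; intro t _
    rw [map_sum]
    apply Finset.sum_congr rfl; intro s _
    split
    · rw [map_smul]
      show _ • β _ = _
      rw [hcompat]
      refine congrArg _ (congrArg _ (funext fun j => ?_))
      by_cases h : t.succAbove j = s
      · simp [h, hmult]
      · simp [h]
    · simp
  · apply Finset.sum_congr rfl; intro s _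
    rw [map_smul]
    show _ • β _ = _
    rw [← hβbv, hcompat]
    congr 2
    rw [← Function.iterate_succ_apply, Function.iterate_succ_apply']
end

section
/- Fix λ ∈ ℝ, λ ≠ 0, and consider the Hom-Lie superalgebra osp(1,2)_λ. Every bilinear super skew-symmetric map f : osp(1,2) × osp(1,2) → ℂ satisfying f(α_λ(x),α_λ(y)) = f(x,y) for all x,y and the 2-cocycle condition −f([x₀,x₁]_λ, α_λ(x₂)) + (−1)^{|x₂||x₁|} f([x₀,x₂]_λ, α_λ(x₁)) + f(α_λ(x₀), [x₁,x₂]_λ) = 0 for all homogeneous x₀,x₁,x₂, is a coboundary: there exists a linear map g : osp(1,2) → ℂ with g∘α_λ = g such that f(x,y) = −g([x,y]_λ) for all x,y. Hence H²(osp(1,2)_λ, ℂ) = {0}. -/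
/-- The grading of `osp(1,2)`: with basis `b 0 = H, b 1 = X, b 2 = Y` (even) and
`b 3 = F, b 4 = G` (odd). -/
def ospGr {V : Type*} [AddCommGroup V] [Module ℂ V] (b : Module.Basis (Fin 5) ℂ V) :
    ZMod 2 → Submodule ℂ V :=
  fun i => if i = 0 then Submodule.span ℂ {b 0, b 1, b 2} else Submodule.span ℂ {b 3, b 4}

section Bilinear

variable {R M N ι : Type*} [Semiring R] [AddCommMonoid M] [Module R M]
  [AddCommMonoid N] [Module R N]

theorem Module.Basis.isLinearMap_ext (b : Module.Basis ι R M) {g g' : M → N}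
    (hg : IsLinearMap R g) (hg' : IsLinearMap R g') (h : ∀ i, g (b i) = g' (b i)) : g = g' :=
  congrArg DFunLike.coe (b.ext (f₁ := hg.mk' g) (f₂ := hg'.mk' g') h)

theorem Module.Basis.isLinearMap₂_ext (b : Module.Basis ι R M) {f f' : M → M → N}
    (hl : ∀ y, IsLinearMap R fun x => f x y) (hl' : ∀ y, IsLinearMap R fun x => f' x y)
    (hr : ∀ x, IsLinearMap R (f x)) (hr' : ∀ x, IsLinearMap R (f' x))
    (h : ∀ i j, f (b i) (b j) = f' (b i) (b j)) : f = f' := by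
  funext x
  refine b.isLinearMap_ext (hr x) (hr' x) fun j => ?_
  exact congrFun (b.isLinearMap_ext (hl (b j)) (hl' (b j)) fun i => h i j) x

end Bilinear

section SuperSkew

variable {K G : Type*} [Field K] [AddCommGroup G] [Module K G]

def IsSuperSkew (Gr : ZMod 2 → Submodule K G) (f : G → G → K) : Prop :=
  ∀ i j : ZMod 2, ∀ x ∈ Gr i, ∀ y ∈ Gr j, f x y = -((-1 : K) ^ (i.val * j.val)) * f y x

theorem IsSuperSkew.apply_self_eq_zero [NeZero (2 : K)] {Gr : ZMod 2 → Submodule K G}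
    {f : G → G → K} (hf : IsSuperSkew Gr f) {x : G} (hx : x ∈ Gr 0) : f x x = 0 := by
  have h := hf 0 0 x hx x hx
  simp only [ZMod.val_zero, mul_zero, pow_zero] at h
  have h2 : (2 : K) * f x x = 0 := by linear_combination h
  exact (mul_eq_zero.mp h2).resolve_left two_ne_zero

theorem isSuperSkew_neg_comp_bracket {Gr : ZMod 2 → Submodule K G} {br : G → G → G}
    {g : G → K} (hg : IsLinearMap K g)
    (hbr : ∀ i j : ZMod 2, ∀ x ∈ Gr i, ∀ y ∈ Gr j,
      br x y = (-((-1 : K) ^ (i.val * j.val))) • br y x) :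
    IsSuperSkew Gr fun x y => -g (br x y) := by
  intro i j x hx y hy
  dsimp only
  rw [hbr i j x hx y hy, hg.map_smul, smul_eq_mul]
  ring

theorem IsSuperSkew.ext_basis [NeZero (2 : K)] {ι : Type*} [LinearOrder ι]
    {Gr : ZMod 2 → Submodule K G} (b : Module.Basis ι K G) (deg : ι → ZMod 2)
    (hb : ∀ i, b i ∈ Gr (deg i)) {f f' : G → G → K} (hf : IsSuperSkew Gr f)
    (hf' : IsSuperSkew Gr f')
    (hl : ∀ y, IsLinearMap K fun x => f x y) (hl' : ∀ y, IsLinearMap K fun x => f' x y)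
    (hr : ∀ x, IsLinearMap K (f x)) (hr' : ∀ x, IsLinearMap K (f' x))
    (hlt : ∀ i j, i < j → f (b i) (b j) = f' (b i) (b j))
    (hodd : ∀ i, deg i ≠ 0 → f (b i) (b i) = f' (b i) (b i)) : f = f' := by
  refine b.isLinearMap₂_ext hl hl' hr hr' fun i j => ?_
  rcases lt_trichotomy i j with hij | rfl | hji
  · exact hlt i j hij
  · by_cases h0 : deg i = 0
    · rw [hf.apply_self_eq_zero (h0 ▸ hb i), hf'.apply_self_eq_zero (h0 ▸ hb i)]
    · exact hodd i h0
  · rw [hf _ _ _ (hb i) _ (hb j), hf' _ _ _ (hb i) _ (hb j), hlt j i hji]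

end SuperSkew

section Cohomology

variable {K G : Type*} [Field K] [AddCommGroup G] [Module K G]

structure IsScalarCocycle (Gr : ZMod 2 → Submodule K G) (br : G → G → G) (α : G → G)
    (f : G → G → K) : Prop where
  isLinearMap_right : ∀ x, IsLinearMap K (f x)
  isLinearMap_left : ∀ y, IsLinearMap K fun x => f x y
  superSkew : IsSuperSkew Gr f
  map_α : ∀ x y, f (α x) (α y) = f x y
  cocycle : ∀ i j l : ZMod 2, ∀ x₀ ∈ Gr i, ∀ x₁ ∈ Gr j, ∀ x₂ ∈ Gr l,
    -f (br x₀ x₁) (α x₂) + ((-1 : K) ^ (l.val * j.val)) * f (br x₀ x₂) (α x₁) +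
      f (α x₀) (br x₁ x₂) = 0

def IsScalarCoboundary (br : G → G → G) (α : G → G) (f : G → G → K) : Prop :=
  ∃ g : G → K, IsLinearMap K g ∧ (∀ x, g (α x) = g x) ∧ ∀ x y, f x y = -g (br x y)

namespace IsScalarCocycle

variable {Gr : ZMod 2 → Submodule K G} {br : G → G → G} {α : G → G} {f : G → G → K}

theorem smul_left (hf : IsScalarCocycle Gr br α f) (c : K) (x y : G) :
    f (c • x) y = c * f x y :=
  (hf.isLinearMap_left y).map_smul c x

theorem smul_right (hf : IsScalarCocycle Gr br α f) (c : K) (x y : G) :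
    f x (c • y) = c * f x y :=
  (hf.isLinearMap_right x).map_smul c y

theorem neg_left (hf : IsScalarCocycle Gr br α f) (x y : G) : f (-x) y = -f x y :=
  (hf.isLinearMap_left y).map_neg x

theorem neg_right (hf : IsScalarCocycle Gr br α f) (x y : G) : f x (-y) = -f x y :=
  (hf.isLinearMap_right x).map_neg y

theorem zero_right (hf : IsScalarCocycle Gr br α f) (x : G) : f x 0 = 0 :=
  (hf.isLinearMap_right x).map_zero

end IsScalarCocycle

end Cohomology

section Osp12

variable {V : Type*} [AddCommGroup V] [Module ℂ V]

def ospDeg : Fin 5 → ZMod 2 := ![0, 0, 0, 1, 1]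

theorem basis_mem_ospGr (b : Module.Basis (Fin 5) ℂ V) (i : Fin 5) :
    b i ∈ ospGr b (ospDeg i) := by
  fin_cases i <;> simp [ospGr, ospDeg] <;> apply Submodule.subset_span <;> simp

/-- `b = (H, X, Y, F, G)` carries the bracket and twist of `osp(1,2)_λ`, with `L = λ`. -/
structure IsOsp12Basis (L : ℂ) (b : Module.Basis (Fin 5) ℂ V) (br : V → V → V) (α : V → V) :
    Prop where
  ne_zero : L ≠ 0
  α_H : α (b 0) = b 0
  α_X : α (b 1) = (L ^ 2) • b 1
  α_Y : α (b 2) = ((L ^ 2)⁻¹) • b 2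
  α_F : α (b 3) = L⁻¹ • b 3
  α_G : α (b 4) = L • b 4
  br_HX : br (b 0) (b 1) = (2 * L ^ 2) • b 1
  br_HY : br (b 0) (b 2) = (-(2 / L ^ 2)) • b 2
  br_XY : br (b 1) (b 2) = b 0
  br_YG : br (b 2) (b 4) = L⁻¹ • b 3
  br_XF : br (b 1) (b 3) = L • b 4
  br_HF : br (b 0) (b 3) = (-L⁻¹) • b 3
  br_HG : br (b 0) (b 4) = L • b 4
  br_GF : br (b 4) (b 3) = b 0
  br_GX : br (b 4) (b 1) = 0
  br_YF : br (b 2) (b 3) = 0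
  br_GG : br (b 4) (b 4) = (-(2 * L ^ 2)) • b 1
  br_FF : br (b 3) (b 3) = (2 / L ^ 2) • b 2

variable {L : ℂ} {b : Module.Basis (Fin 5) ℂ V} {br : V → V → V} {α : V → V} {f : V → V → ℂ}

theorem IsScalarCocycle.skew_basis (hf : IsScalarCocycle (ospGr b) br α f) (i j : Fin 5) :
    f (b i) (b j) = -((-1) ^ ((ospDeg i).val * (ospDeg j).val)) * f (b j) (b i) :=
  hf.superSkew _ _ _ (basis_mem_ospGr b i) _ (basis_mem_ospGr b j)

theorem IsScalarCocycle.cocycle_basis (hf : IsScalarCocycle (ospGr b) br α f) (i j l : Fin 5) :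
    -f (br (b i) (b j)) (α (b l)) +
      (-1) ^ ((ospDeg l).val * (ospDeg j).val) * f (br (b i) (b l)) (α (b j)) +
      f (α (b i)) (br (b j) (b l)) = 0 :=
  hf.cocycle _ _ _ _ (basis_mem_ospGr b i) _ (basis_mem_ospGr b j) _ (basis_mem_ospGr b l)

/-- `g(H) = -f(X, Y)`; on `X, Y, F, G`, which are eigenvectors of `[H, ·]` with eigenvalues
`2L², -2/L², -1/L, L`, the value is read off from `f(H, ·)`. -/
noncomputable def osp12Primitive (L : ℂ) (b : Module.Basis (Fin 5) ℂ V) (f : V → V → ℂ) :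
    V →ₗ[ℂ] ℂ :=
  b.constr ℂ ![-f (b 1) (b 2), -(2 * L ^ 2)⁻¹ * f (b 0) (b 1), L ^ 2 / 2 * f (b 0) (b 2),
    L * f (b 0) (b 3), -L⁻¹ * f (b 0) (b 4)]

theorem osp12Primitive_apply_basis (i : Fin 5) :
    osp12Primitive L b f (b i) = ![-f (b 1) (b 2), -(2 * L ^ 2)⁻¹ * f (b 0) (b 1),
      L ^ 2 / 2 * f (b 0) (b 2), L * f (b 0) (b 3), -L⁻¹ * f (b 0) (b 4)] i :=
  b.constr_basis ℂ _ i

namespace IsOsp12Basis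

theorem cocycle_X_G (h : IsOsp12Basis L b br α) (hf : IsScalarCocycle (ospGr b) br α f) :
    f (b 1) (b 4) = 0 := by
  have e := hf.cocycle_basis 0 4 1
  simp [h.br_HG, h.br_HX, h.br_GX, h.α_H, h.α_X, h.α_G, hf.smul_left, hf.smul_right, ZMod.val_one,
    hf.zero_right, ospDeg, hf.skew_basis 4 1] at e
  have hL := h.ne_zero
  linear_combination (norm := (field_simp; ring)) (1 / (3 * L ^ 3)) * e

theorem cocycle_Y_F (h : IsOsp12Basis L b br α) (hf : IsScalarCocycle (ospGr b) br α f) :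
    f (b 2) (b 3) = 0 := by
  have e := hf.cocycle_basis 0 2 3
  simp [h.br_HY, h.br_HF, h.br_YF, h.α_H, h.α_Y, h.α_F, hf.smul_left, hf.smul_right, hf.neg_left,
    ZMod.val_one, hf.zero_right, ospDeg, hf.skew_basis 3 2] at e
  have hL := h.ne_zero
  linear_combination (norm := (field_simp; ring)) (L ^ 3 / 3) * e

theorem cocycle_Y_G (h : IsOsp12Basis L b br α) (hf : IsScalarCocycle (ospGr b) br α f) :
    f (b 2) (b 4) = -f (b 0) (b 3) := by
  have e := hf.cocycle_basis 0 2 4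
  simp [h.br_HY, h.br_HG, h.br_YG, h.α_H, h.α_Y, h.α_G, hf.smul_left, hf.smul_right, hf.neg_left,
    ZMod.val_one, ospDeg, hf.skew_basis 4 2] at e
  have hL := h.ne_zero
  linear_combination (norm := (field_simp; ring)) L * e

theorem cocycle_X_F (h : IsOsp12Basis L b br α) (hf : IsScalarCocycle (ospGr b) br α f) :
    f (b 1) (b 3) = f (b 0) (b 4) := by
  have e := hf.cocycle_basis 0 1 3
  simp [h.br_HX, h.br_HF, h.br_XF, h.α_H, h.α_X, h.α_F, hf.smul_left, hf.smul_right, hf.neg_left,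
    ZMod.val_one, ospDeg, hf.skew_basis 3 1] at e
  have hL := h.ne_zero
  linear_combination (norm := (field_simp; ring)) (-1 / L) * e

theorem cocycle_F_G (h : IsOsp12Basis L b br α) (hf : IsScalarCocycle (ospGr b) br α f) :
    f (b 3) (b 4) = f (b 1) (b 2) := by
  have e := hf.cocycle_basis 2 4 4
  simp [h.br_YG, h.br_GG, h.α_Y, h.α_G, hf.smul_left, hf.smul_right, hf.neg_right, ZMod.val_one,
    ospDeg, hf.skew_basis 2 1] at e
  have hL := h.ne_zero
  linear_combination (norm := (field_simp; ring)) (-1 / 2) * e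

theorem cocycle_F_F (h : IsOsp12Basis L b br α) (hf : IsScalarCocycle (ospGr b) br α f) :
    f (b 3) (b 3) = -f (b 0) (b 2) := by
  have e := hf.cocycle_basis 0 3 3
  simp [h.br_HF, h.br_FF, h.α_H, h.α_F, hf.smul_left, hf.smul_right, hf.neg_left, ZMod.val_one,
    ospDeg] at e
  have hL := h.ne_zero
  linear_combination (norm := (field_simp; ring)) (L ^ 2 / 2) * e

theorem cocycle_G_G (h : IsOsp12Basis L b br α) (hf : IsScalarCocycle (ospGr b) br α f) :
    f (b 4) (b 4) = -f (b 0) (b 1) := by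
  have e := hf.cocycle_basis 0 4 4
  simp [h.br_HG, h.br_GG, h.α_H, h.α_G, hf.smul_left, hf.smul_right, hf.neg_right, ZMod.val_one,
    ospDeg] at e
  have hL := h.ne_zero
  linear_combination (norm := (field_simp; ring)) (-1 / (2 * L ^ 2)) * e

theorem osp12Primitive_map_α (h : IsOsp12Basis L b br α) (hα : IsLinearMap ℂ α)
    (hfr : ∀ x, IsLinearMap ℂ (f x)) (hfα : ∀ x y, f (α x) (α y) = f x y) (x : V) :
    osp12Primitive L b f (α x) = osp12Primitive L b f x := by
  refine congrFun (b.isLinearMap_ext ((osp12Primitive L b f).comp (hα.mk' α)).isLinear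
    (osp12Primitive L b f).isLinear fun i => ?_) x
  have inv := hfα (b 0) (b i)
  fin_cases i <;> simp [osp12Primitive_apply_basis, h.α_H, h.α_X, h.α_Y, h.α_F, h.α_G,
    (hfr _).map_smul] at inv ⊢ <;>
    rw [mul_left_comm, inv]

theorem eq_neg_osp12Primitive_bracket (h : IsOsp12Basis L b br α)
    (hHL : IsHomLieSuper (ospGr b) br α) (hf : IsScalarCocycle (ospGr b) br α f) :
    f = fun x y => -osp12Primitive L b f (br x y) := by
  obtain ⟨-, hbr_right, hbr_left, -, -, hbr_skew, -⟩ := hHL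
  have hL := h.ne_zero
  have br_XG : br (b 1) (b 4) = 0 := by
    simpa [h.br_GX] using hbr_skew _ _ _ (basis_mem_ospGr b 1) _ (basis_mem_ospGr b 4)
  have br_FG : br (b 3) (b 4) = b 0 := by
    simpa [h.br_GF, ospDeg, ZMod.val_one] using
      hbr_skew _ _ _ (basis_mem_ospGr b 3) _ (basis_mem_ospGr b 4)
  refine IsSuperSkew.ext_basis b ospDeg (basis_mem_ospGr b) hf.superSkew
    (isSuperSkew_neg_comp_bracket (osp12Primitive L b f).isLinear hbr_skew) hf.isLinearMap_left
    (fun y => (-(osp12Primitive L b f).comp ((hbr_left y).mk' _)).isLinear) hf.isLinearMap_right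
    (fun x => (-(osp12Primitive L b f).comp ((hbr_right x).mk' _)).isLinear) ?_ ?_
  · intro i j hij
    fin_cases i <;> fin_cases j <;> simp at hij <;>
      simp [osp12Primitive_apply_basis, h.br_HX, h.br_HY, h.br_HF, h.br_HG, h.br_XY, h.br_XF,
        br_XG, h.br_YF, h.br_YG, br_FG, h.cocycle_X_F hf, h.cocycle_X_G hf, h.cocycle_Y_F hf,
        h.cocycle_Y_G hf, h.cocycle_F_G hf] <;>
      field_simp
  · intro i hi
    fin_cases i <;> simp [ospDeg] at hi <;>
      simp [osp12Primitive_apply_basis, h.br_FF, h.br_GG, h.cocycle_F_F hf, h.cocycle_G_G hf] <;>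
      field_simp

theorem isScalarCoboundary (h : IsOsp12Basis L b br α) (hHL : IsHomLieSuper (ospGr b) br α)
    (hf : IsScalarCocycle (ospGr b) br α f) : IsScalarCoboundary br α f :=
  ⟨osp12Primitive L b f, (osp12Primitive L b f).isLinear,
    h.osp12Primitive_map_α hHL.1 hf.isLinearMap_right hf.map_α,
    fun x y => congrFun (congrFun (h.eq_neg_osp12Primitive_bracket hHL hf) x) y⟩

end IsOsp12Basis

end Osp12

/-- Every scalar 2-cocycle of the Hom-Lie superalgebra `osp(1,2)_λ`
(`λ ∈ ℝ, λ ≠ 0`) is a coboundary; hence `H²(osp(1,2)_λ, ℂ) = 0`. -/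
theorem osp12_second_cohomology_trivial
    (lam : ℝ) (hlam : lam ≠ 0)
    (V : Type*) [AddCommGroup V] [Module ℂ V] (b : Module.Basis (Fin 5) ℂ V)
    (br : V → V → V) (α : V → V)
    (hHL : IsHomLieSuper (ospGr b) br α)
    -- the twist map α_λ
    (hαH : α (b 0) = b 0)
    (hαX : α (b 1) = ((lam : ℂ) ^ 2) • b 1)
    (hαY : α (b 2) = (((lam : ℂ) ^ 2)⁻¹) • b 2)
    (hαF : α (b 3) = ((lam : ℂ)⁻¹) • b 3)
    (hαG : α (b 4) = (lam : ℂ) • b 4)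
    -- the bracket [·,·]_λ
    (hHX : br (b 0) (b 1) = (2 * (lam : ℂ) ^ 2) • b 1)
    (hHY : br (b 0) (b 2) = (-(2 / (lam : ℂ) ^ 2)) • b 2)
    (hXY : br (b 1) (b 2) = b 0)
    (hYG : br (b 2) (b 4) = ((lam : ℂ)⁻¹) • b 3)
    (hXF : br (b 1) (b 3) = (lam : ℂ) • b 4)
    (hHF : br (b 0) (b 3) = (-(lam : ℂ)⁻¹) • b 3)
    (hHG : br (b 0) (b 4) = (lam : ℂ) • b 4)
    (hGF : br (b 4) (b 3) = b 0)
    (hGX : br (b 4) (b 1) = 0)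
    (hYF : br (b 2) (b 3) = 0)
    (hGG : br (b 4) (b 4) = (-(2 * (lam : ℂ) ^ 2)) • b 1)
    (hFF : br (b 3) (b 3) = (2 / (lam : ℂ) ^ 2) • b 2)
    -- a scalar 2-cochain
    (f : V → V → ℂ)
    (hf1 : ∀ x, IsLinearMap ℂ (f x)) (hf2 : ∀ y, IsLinearMap ℂ fun x => f x y)
    (hfskew : ∀ (i j : ZMod 2), ∀ x ∈ ospGr b i, ∀ y ∈ ospGr b j,
        f x y = -((-1 : ℂ) ^ (i.val * j.val)) * f y x)
    (hfα : ∀ x y, f (α x) (α y) = f x y)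
    -- the 2-cocycle condition
    (hco : ∀ (i j l : ZMod 2), ∀ x₀ ∈ ospGr b i, ∀ x₁ ∈ ospGr b j, ∀ x₂ ∈ ospGr b l,
        -f (br x₀ x₁) (α x₂) + ((-1 : ℂ) ^ (l.val * j.val)) * f (br x₀ x₂) (α x₁) +
          f (α x₀) (br x₁ x₂) = 0) :
    ∃ g : V → ℂ, IsLinearMap ℂ g ∧ (∀ x, g (α x) = g x) ∧
      ∀ x y, f x y = -g (br x y) := by
  have hL : (lam : ℂ) ≠ 0 := by exact_mod_cast hlam
  exact IsOsp12Basis.isScalarCoboundary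
    ⟨hL, hαH, hαX, hαY, hαF, hαG, hHX, hHY, hXY, hYG, hXF, hHF, hHG, hGF, hGX, hYF, hGG, hFF⟩ hHL
    ⟨hf1, hf2, hfskew, hfα, hco⟩
end

section
/- Let (G,[·,·],α) be a multiplicative Hom-Lie superalgebra over ℂ and let θ : G × G → ℂ be an even bilinear super skew-symmetric map satisfying θ(α(x),α(y)) = θ(x,y) for all x,y. On G̃ = G ⊕ ℂ with grading G̃₀ = G₀ ⊕ ℂ, G̃₁ = G₁, define [(x,s),(y,t)]_θ := ([x,y], θ(x,y)) and α̃(x,s) := (α(x),s). Then (G̃,[·,·]_θ,α̃) is a Hom-Lie superalgebra if and only if θ is a 2-cocycle, i.e. the cyclic sum (−1)^{|x||z|}θ(α(x),[y,z]) + (−1)^{|z||y|}θ(α(z),[x,y]) + (−1)^{|y||x|}θ(α(y),[z,x]) = 0 holds for all homogeneous x,y,z ∈ G. -/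
private lemma zmod2_ne_zero : ∀ i : ZMod 2, i ≠ 0 → i = 1 := by decide

private lemma zmod2_add_ne_zero : ∀ i j : ZMod 2, i + j ≠ 0 → i + j = 1 ∧ i ≠ j := by decide

/-- The central extension `G̃ = G ⊕ ℂ` (with grading `G̃₀ = G₀ ⊕ ℂ`,
`G̃₁ = G₁`, bracket `[(x,s),(y,t)]_θ = ([x,y], θ(x,y))` and twist `α̃(x,s) = (α x, s)`) is a
Hom-Lie superalgebra if and only if `θ` is a 2-cocycle. -/
theorem centralExtension_isHomLieSuper_iff_cocycle
    (G : Type*) [AddCommGroup G] [Module ℂ G]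
    (Gr : ZMod 2 → Submodule ℂ G) (hGr : DirectSum.IsInternal Gr)
    (br : G → G → G) (α : G → G) (hHL : IsHomLieSuper Gr br α)
    (hmult : ∀ x y : G, α (br x y) = br (α x) (α y))
    (θ : G → G → ℂ)
    (hθ1 : ∀ x, IsLinearMap ℂ (θ x)) (hθ2 : ∀ y, IsLinearMap ℂ fun x => θ x y)
    (hθeven : ∀ i j : ZMod 2, i ≠ j → ∀ x ∈ Gr i, ∀ y ∈ Gr j, θ x y = 0)
    (hθskew : ∀ (i j : ZMod 2), ∀ x ∈ Gr i, ∀ y ∈ Gr j,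
        θ x y = -((-1 : ℂ) ^ (i.val * j.val)) * θ y x)
    (hθα : ∀ x y, θ (α x) (α y) = θ x y) :
    IsHomLieSuper
        (fun i : ZMod 2 =>
          if i = 0 then (Gr 0).prod (⊤ : Submodule ℂ ℂ)
          else (Gr 1).prod (⊥ : Submodule ℂ ℂ))
        (fun u v => (br u.1 v.1, θ u.1 v.1))
        (fun u => (α u.1, u.2)) ↔
      (∀ (i j l : ZMod 2), ∀ x ∈ Gr i, ∀ y ∈ Gr j, ∀ z ∈ Gr l,
        ((-1 : ℂ) ^ (i.val * l.val)) * θ (α x) (br y z) +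
        ((-1 : ℂ) ^ (l.val * j.val)) * θ (α z) (br x y) +
        ((-1 : ℂ) ^ (j.val * i.val)) * θ (α y) (br z x) = 0) := by
  obtain ⟨hα, hbr1, hbr2, hgr, hαgr, hskew, hjac⟩ := hHL
  have hmem : ∀ (i : ZMod 2) (x : G), x ∈ Gr i →
      ((x, (0:ℂ)) ∈ (if i = 0 then (Gr 0).prod (⊤ : Submodule ℂ ℂ)
        else (Gr 1).prod (⊥ : Submodule ℂ ℂ))) := by
    intro i x hx
    by_cases h : i = 0
    · rw [if_pos h]; exact Submodule.mem_prod.mpr ⟨h ▸ hx, trivial⟩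
    · rw [if_neg h]
      exact Submodule.mem_prod.mpr ⟨zmod2_ne_zero i h ▸ hx, (Submodule.mem_bot ℂ).mpr rfl⟩
  have hmem' : ∀ (i : ZMod 2) (u : G × ℂ),
      (u ∈ (if i = 0 then (Gr 0).prod (⊤ : Submodule ℂ ℂ)
        else (Gr 1).prod (⊥ : Submodule ℂ ℂ))) → u.1 ∈ Gr i := by
    intro i u hu
    by_cases h : i = 0
    · rw [if_pos h] at hu; exact h ▸ (Submodule.mem_prod.mp hu).1
    · rw [if_neg h] at hu; exact zmod2_ne_zero i h ▸ (Submodule.mem_prod.mp hu).1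
  constructor
  · intro hext i j l x hx y hy z hz
    obtain ⟨_, _, _, _, _, _, hjacE⟩ := hext
    have h := hjacE i j l (x, 0) (hmem i x hx) (y, 0) (hmem j y hy) (z, 0) (hmem l z hz)
    have h2 := congrArg Prod.snd h
    simpa [smul_eq_mul] using h2
  · intro hco
    refine ⟨?_, ?_, ?_, ?_, ?_, ?_, ?_⟩
    · exact ⟨fun u v => Prod.ext (hα.map_add u.1 v.1) rfl,
        fun c u => Prod.ext (hα.map_smul c u.1) rfl⟩
    · intro u
      exact ⟨fun v w => Prod.ext ((hbr1 u.1).map_add v.1 w.1) ((hθ1 u.1).map_add v.1 w.1),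
        fun c v => Prod.ext ((hbr1 u.1).map_smul c v.1) ((hθ1 u.1).map_smul c v.1)⟩
    · intro v
      exact ⟨fun u w => Prod.ext ((hbr2 v.1).map_add u.1 w.1) ((hθ2 v.1).map_add u.1 w.1),
        fun c u => Prod.ext ((hbr2 v.1).map_smul c u.1) ((hθ2 v.1).map_smul c u.1)⟩
    · intro i j u hu v hv
      have hx := hmem' i u hu
      have hy := hmem' j v hv
      have hb := hgr i j u.1 hx v.1 hy
      show (br u.1 v.1, θ u.1 v.1) ∈
        (if i + j = 0 then (Gr 0).prod (⊤ : Submodule ℂ ℂ)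
          else (Gr 1).prod (⊥ : Submodule ℂ ℂ))
      by_cases h : i + j = 0
      · rw [if_pos h]
        exact Submodule.mem_prod.mpr ⟨h ▸ hb, trivial⟩
      · obtain ⟨h1, hne⟩ := zmod2_add_ne_zero i j h
        rw [if_neg h]
        refine Submodule.mem_prod.mpr ⟨h1 ▸ hb, ?_⟩
        exact (Submodule.mem_bot ℂ).mpr (hθeven i j hne u.1 hx v.1 hy)
    · intro i u hu
      show (α u.1, u.2) ∈
        (if i = 0 then (Gr 0).prod (⊤ : Submodule ℂ ℂ)
          else (Gr 1).prod (⊥ : Submodule ℂ ℂ))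
      have hu' : u ∈ (if i = 0 then (Gr 0).prod (⊤ : Submodule ℂ ℂ)
          else (Gr 1).prod (⊥ : Submodule ℂ ℂ)) := hu
      by_cases h : i = 0
      · rw [if_pos h] at hu' ⊢
        exact Submodule.mem_prod.mpr ⟨hαgr 0 u.1 (h ▸ (Submodule.mem_prod.mp hu').1), trivial⟩
      · rw [if_neg h] at hu' ⊢
        obtain ⟨hu1, hu2⟩ := Submodule.mem_prod.mp hu' 
        exact Submodule.mem_prod.mpr ⟨hαgr 1 u.1 (zmod2_ne_zero i h ▸ hu1), hu2⟩
    · intro i j u hu v hv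
      have hx := hmem' i u hu
      have hy := hmem' j v hv
      have h1 := hskew i j u.1 hx v.1 hy
      have h2 := hθskew i j u.1 hx v.1 hy
      refine Prod.ext h1 ?_
      simp only [Prod.smul_snd, smul_eq_mul]
      exact h2
    · intro i j l u hu v hv w hw
      have hx := hmem' i u hu
      have hy := hmem' j v hv
      have hz := hmem' l w hw
      have h1 := hjac i j l u.1 hx v.1 hy w.1 hz
      have h2 := hco i j l u.1 hx v.1 hy w.1 hz
      refine Prod.ext ?_ ?_
      · simpa only [Prod.fst_add, Prod.smul_fst, Prod.fst_zero] using h1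
      · simpa only [Prod.snd_add, Prod.smul_snd, smul_eq_mul, Prod.snd_zero] using h2
end

section
/- Let (G,[·,·],α) be a multiplicative Hom-Lie superalgebra, V = V₀ ⊕ V₁ a ℤ₂-graded vector space with an even linear map β : V → V (regarded as a trivial G-module), and let f, g : G × G → V be even bilinear super skew-symmetric maps with f(α(x),α(y)) = β(f(x,y)), g(α(x),α(y)) = β(g(x,y)), each satisfying the 2-cocycle condition −h([x₀,x₁],α(x₂)) + (−1)^{|x₂||x₁|}h([x₀,x₂],α(x₁)) + h(α(x₀),[x₁,x₂]) = 0 (for h = f and h = g). Define the central extensions G_f and G_g on G ⊕ V by [(x,v),(y,w)]_f := ([x,y], f(x,y)), [(x,v),(y,w)]_g := ([x,y], g(x,y)) and α̃(x,v) := (α(x),β(v)). Then there exists an even linear bijection Φ : G_f → G_g with Φ([u,v]_f) = [Φ(u),Φ(v)]_g, Φ∘α̃ = α̃∘Φ, Φ(0,v) = (0,v) for all v ∈ V, and pr_G∘Φ = pr_G, if and only if there exists a linear map h : G → V with h∘α = β∘h and f(x,y) − g(x,y) = h([x,y]) for all x,y ∈ G. -/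
section Aux

open DirectSum

variable {K M N : Type*} [Field K] [AddCommGroup M] [Module K M]
  [AddCommGroup N] [Module K N]

/-- Projection onto the `k`-th graded piece of an internally graded module. -/
noncomputable def sproj (Mr : ZMod 2 → Submodule K M) [Decomposition Mr] (k : ZMod 2) :
    M →ₗ[K] M :=
  (Mr k).subtype ∘ₗ (component K (ZMod 2) (fun i => Mr i) k) ∘ₗ
    (decomposeLinearEquiv Mr).toLinearMap

lemma sproj_apply (Mr : ZMod 2 → Submodule K M) [Decomposition Mr] (k : ZMod 2) (x : M) :
    sproj Mr k x = ((decompose Mr x) k : M) := rfl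

lemma sproj_mem (Mr : ZMod 2 → Submodule K M) [Decomposition Mr] (k : ZMod 2) (x : M) :
    sproj Mr k x ∈ Mr k := ((decompose Mr x) k).2

lemma sproj_of_mem_same (Mr : ZMod 2 → Submodule K M) [Decomposition Mr] {k : ZMod 2}
    {x : M} (hx : x ∈ Mr k) : sproj Mr k x = x := by
  rw [sproj_apply, decompose_of_mem_same Mr hx]

lemma sproj_of_mem_ne (Mr : ZMod 2 → Submodule K M) [Decomposition Mr] {k j : ZMod 2}
    {x : M} (hx : x ∈ Mr k) (hjk : j ≠ k) : sproj Mr j x = 0 := by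
  rw [sproj_apply, decompose_of_mem_ne Mr hx (Ne.symm hjk)]

lemma sproj_sum (Mr : ZMod 2 → Submodule K M) [Decomposition Mr] (x : M) :
    ∑ k : ZMod 2, sproj Mr k x = x := by
  classical
  conv_rhs => rw [← (decompose Mr).symm_apply_apply x, ← sum_univ_of (decompose Mr x)]
  rw [decompose_symm_sum]
  exact Finset.sum_congr rfl fun k _ => by rw [decompose_symm_of, sproj_apply]

lemma sproj_comm (Mr : ZMod 2 → Submodule K M) [Decomposition Mr] (T : M → M)
    (hT : IsLinearMap K T) (hTe : ∀ k : ZMod 2, ∀ x ∈ Mr k, T x ∈ Mr k) (k : ZMod 2)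
    (x : M) : sproj Mr k (T x) = T (sproj Mr k x) := by
  classical
  conv_lhs => rw [← sproj_sum Mr x]
  rw [show T (∑ k : ZMod 2, sproj Mr k x) = ∑ k : ZMod 2, T (sproj Mr k x) from
    map_sum (IsLinearMap.mk' T hT) _ _, map_sum]
  refine (Finset.sum_eq_single_of_mem k (Finset.mem_univ k) fun j _ hjk =>
    sproj_of_mem_ne Mr (hTe j _ (sproj_mem Mr j x)) hjk.symm).trans
    (sproj_of_mem_same Mr (hTe k _ (sproj_mem Mr k x)))

end Aux



/-- Two central extensions `G_f` and `G_g` of a multiplicative Hom-Lie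
superalgebra `G` by a trivial module `(V, β)`, given by 2-cocycles `f` and `g`, are
equivalent (via an even linear bijection `Φ` commuting with the structure maps, fixing `V`
and covering the identity of `G`) if and only if `f - g` is a coboundary, i.e.
`f(x,y) - g(x,y) = h([x,y])` for some linear `h : G → V` with `h ∘ α = β ∘ h`. -/
theorem extensions_equivalent_iff_coboundary
    (K G V : Type*) [Field K] [CharZero K] [AddCommGroup G] [Module K G]
    [AddCommGroup V] [Module K V]
    (Gr : ZMod 2 → Submodule K G) (hGr : DirectSum.IsInternal Gr)
    (br : G → G → G) (α : G → G) (hHL : IsHomLieSuper Gr br α)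
    (hmult : ∀ x y : G, α (br x y) = br (α x) (α y))
    (Vgr : ZMod 2 → Submodule K V) (hVgr : DirectSum.IsInternal Vgr)
    (β : V → V) (hβ : IsLinearMap K β) (hβeven : ∀ j : ZMod 2, ∀ v ∈ Vgr j, β v ∈ Vgr j)
    (f g : G → G → V)
    (hf1 : ∀ x, IsLinearMap K (f x)) (hf2 : ∀ y, IsLinearMap K fun x => f x y)
    (hg1 : ∀ x, IsLinearMap K (g x)) (hg2 : ∀ y, IsLinearMap K fun x => g x y)
    (hfeven : ∀ i j : ZMod 2, ∀ x ∈ Gr i, ∀ y ∈ Gr j, f x y ∈ Vgr (i + j))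
    (hgeven : ∀ i j : ZMod 2, ∀ x ∈ Gr i, ∀ y ∈ Gr j, g x y ∈ Vgr (i + j))
    (hfskew : ∀ (i j : ZMod 2), ∀ x ∈ Gr i, ∀ y ∈ Gr j,
        f x y = (-((-1 : K) ^ (i.val * j.val))) • f y x)
    (hgskew : ∀ (i j : ZMod 2), ∀ x ∈ Gr i, ∀ y ∈ Gr j,
        g x y = (-((-1 : K) ^ (i.val * j.val))) • g y x)
    (hfα : ∀ x y, f (α x) (α y) = β (f x y))
    (hgα : ∀ x y, g (α x) (α y) = β (g x y))
    (hfco : ∀ (i j l : ZMod 2), ∀ x₀ ∈ Gr i, ∀ x₁ ∈ Gr j, ∀ x₂ ∈ Gr l,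
        -f (br x₀ x₁) (α x₂) + ((-1 : K) ^ (l.val * j.val)) • f (br x₀ x₂) (α x₁) +
          f (α x₀) (br x₁ x₂) = 0)
    (hgco : ∀ (i j l : ZMod 2), ∀ x₀ ∈ Gr i, ∀ x₁ ∈ Gr j, ∀ x₂ ∈ Gr l,
        -g (br x₀ x₁) (α x₂) + ((-1 : K) ^ (l.val * j.val)) • g (br x₀ x₂) (α x₁) +
          g (α x₀) (br x₁ x₂) = 0) :
    (∃ Φ : G × V → G × V,
        IsLinearMap K Φ ∧ Function.Bijective Φ ∧
        (∀ k : ZMod 2, ∀ u ∈ (Gr k).prod (Vgr k), Φ u ∈ (Gr k).prod (Vgr k)) ∧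
        (∀ u v : G × V,
          Φ (br u.1 v.1, f u.1 v.1) = (br (Φ u).1 (Φ v).1, g (Φ u).1 (Φ v).1)) ∧
        (∀ u : G × V, Φ (α u.1, β u.2) = (α (Φ u).1, β (Φ u).2)) ∧
        (∀ v : V, Φ (0, v) = (0, v)) ∧
        (∀ u : G × V, (Φ u).1 = u.1)) ↔
      (∃ h : G → V, IsLinearMap K h ∧ (∀ x, h (α x) = β (h x)) ∧
        ∀ x y, f x y - g x y = h (br x y)) := by
  classical
  constructor
  · rintro ⟨Φ, hΦlin, -, -, hbrc, hαc, hv0, hpr⟩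
    refine ⟨fun x => -(Φ (x, 0)).2, ⟨?_, ?_⟩, ?_, ?_⟩
    · intro x y
      have h2 : ((x + y : G), (0 : V)) = ((x : G), (0 : V)) + ((y : G), (0 : V)) := by simp
      rw [h2, hΦlin.map_add]
      simp only [Prod.snd_add]
      abel
    · intro c x
      have h2 : ((c • x : G), (0 : V)) = c • ((x : G), (0 : V)) := by
        simp [Prod.smul_mk]
      rw [h2, hΦlin.map_smul]
      simp
    · intro x
      have hβ0 : β 0 = 0 := (IsLinearMap.mk' β hβ).map_zero
      have h1 := hαc (x, 0)
      have h2 : (Φ ((α x : G), (0 : V))).2 = β (Φ (x, 0)).2 := by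
        have := congrArg Prod.snd h1
        simpa [hβ0] using this
      show -(Φ ((α x : G), (0 : V))).2 = β (-(Φ (x, 0)).2)
      rw [h2, show β (-(Φ (x, 0)).2) = -β (Φ (x, 0)).2 from
        (IsLinearMap.mk' β hβ).map_neg _]
    · intro x y
      have h1 := hbrc (x, 0) (y, 0)
      simp only [hpr] at h1
      have h2 : ((br x y : G), f x y) = ((br x y : G), (0 : V)) + ((0 : G), f x y) := by
        simp
      rw [h2, hΦlin.map_add, hv0 (f x y)] at h1
      have h3 := congrArg Prod.snd h1
      simp only [Prod.snd_add] at h3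
      show f x y - g x y = -(Φ ((br x y : G), (0 : V))).2
      rw [← h3]
      abel
  · rintro ⟨h, hhlin, hhα, hhcob⟩
    letI : DirectSum.Decomposition Gr := hGr.chooseDecomposition
    letI : DirectSum.Decomposition Vgr := hVgr.chooseDecomposition
    obtain ⟨hαlin, hbr1, hbr2, hbre, hαe, -, -⟩ := hHL
    set HL : G →ₗ[K] V :=
      ∑ k : ZMod 2, sproj Vgr k ∘ₗ IsLinearMap.mk' h hhlin ∘ₗ sproj Gr k with HLdef
    have HL_apply : ∀ x, HL x = ∑ k : ZMod 2, sproj Vgr k (h (sproj Gr k x)) := by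
      intro x
      rw [HLdef, LinearMap.sum_apply]
      simp [LinearMap.comp_apply]
    have HL_gr : ∀ (k : ZMod 2), ∀ x ∈ Gr k, HL x = sproj Vgr k (h x) := by
      intro k x hx
      rw [HL_apply]
      refine (Finset.sum_eq_single_of_mem k (Finset.mem_univ k) fun j _ hjk => ?_).trans ?_
      · rw [sproj_of_mem_ne Gr hx hjk, hhlin.map_zero, map_zero]
      · rw [sproj_of_mem_same Gr hx]
    have HL_mem : ∀ (k : ZMod 2), ∀ x ∈ Gr k, HL x ∈ Vgr k := fun k x hx => by
      rw [HL_gr k x hx]; exact sproj_mem Vgr k _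
    have HL_alpha : ∀ x, HL (α x) = β (HL x) := by
      intro x
      rw [HL_apply, HL_apply,
        show β (∑ k : ZMod 2, sproj Vgr k (h (sproj Gr k x))) =
            ∑ k : ZMod 2, β (sproj Vgr k (h (sproj Gr k x))) from
          map_sum (IsLinearMap.mk' β hβ) _ _]
      refine Finset.sum_congr rfl fun k _ => ?_
      rw [sproj_comm Gr α hαlin hαe k x, hhα, sproj_comm Vgr β hβ hβeven]
    have key : ∀ x y, f x y - g x y = HL (br x y) := by
      have key0 : ∀ (i j : ZMod 2), ∀ a ∈ Gr i, ∀ b ∈ Gr j,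
          f a b - g a b = HL (br a b) := by
        intro i j a ha b hb
        rw [HL_gr (i + j) _ (hbre i j a ha b hb), ← hhcob a b,
          sproj_of_mem_same Vgr (sub_mem (hfeven i j a ha b hb) (hgeven i j a ha b hb))]
      intro x y
      let fL : G →ₗ[K] G →ₗ[K] V := LinearMap.mk₂ K f (fun a b c => (hf2 c).map_add a b)
        (fun c a b => (hf2 b).map_smul c a) (fun a b c => (hf1 a).map_add b c)
        (fun c a b => (hf1 a).map_smul c b)
      let gL : G →ₗ[K] G →ₗ[K] V := LinearMap.mk₂ K g (fun a b c => (hg2 c).map_add a b)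
        (fun c a b => (hg2 b).map_smul c a) (fun a b c => (hg1 a).map_add b c)
        (fun c a b => (hg1 a).map_smul c b)
      let brL : G →ₗ[K] G →ₗ[K] G := LinearMap.mk₂ K br (fun a b c => (hbr2 c).map_add a b)
        (fun c a b => (hbr2 b).map_smul c a) (fun a b c => (hbr1 a).map_add b c)
        (fun c a b => (hbr1 a).map_smul c b)
      have ex : ∀ (F : G →ₗ[K] G →ₗ[K] V),
          F x y = ∑ i : ZMod 2, ∑ j : ZMod 2, F (sproj Gr i x) (sproj Gr j y) := by
        intro F
        conv_lhs => rw [← sproj_sum Gr x, ← sproj_sum Gr y]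
        rw [show F (∑ i : ZMod 2, sproj Gr i x) = ∑ i : ZMod 2, F (sproj Gr i x) from
          map_sum F _ _, LinearMap.sum_apply]
        exact Finset.sum_congr rfl fun i _ => map_sum _ _ _
      have e1 : f x y - g x y = (fL - gL) x y := by simp [fL, gL]
      have e2 : HL (br x y) = (brL.compr₂ HL) x y := by simp [brL]
      rw [e1, e2, ex (fL - gL), ex (brL.compr₂ HL)]
      refine Finset.sum_congr rfl fun i _ => Finset.sum_congr rfl fun j _ => ?_
      simpa [fL, gL, brL] using key0 i j _ (sproj_mem Gr i x) _ (sproj_mem Gr j y)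
    refine ⟨fun u => (u.1, u.2 - HL u.1), ⟨?_, ?_⟩, ?_, ?_, ?_, ?_, ?_, fun u => rfl⟩
    · intro u v
      simp only [Prod.fst_add, Prod.snd_add, map_add, Prod.mk_add_mk, Prod.mk.injEq]
      exact ⟨trivial, by abel⟩
    · intro c u
      simp only [Prod.smul_fst, Prod.smul_snd, map_smul, Prod.smul_mk, Prod.mk.injEq]
      exact ⟨trivial, by rw [smul_sub]⟩
    · exact Function.bijective_iff_has_inverse.mpr ⟨fun u => (u.1, u.2 + HL u.1),
        fun u => by simp, fun u => by simp⟩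
    · intro k u hu
      rw [Submodule.mem_prod] at hu ⊢
      exact ⟨hu.1, sub_mem hu.2 (HL_mem k u.1 hu.1)⟩
    · intro u v
      show ((br u.1 v.1 : G), f u.1 v.1 - HL (br u.1 v.1)) = (br u.1 v.1, g u.1 v.1)
      rw [← key u.1 v.1, sub_sub_cancel]
    · intro u
      show ((α u.1 : G), β u.2 - HL (α u.1)) = (α u.1, β (u.2 - HL u.1))
      rw [HL_alpha, show β (u.2 - HL u.1) = β u.2 - β (HL u.1) from
        (IsLinearMap.mk' β hβ).map_sub _ _]
    · intro v
      show ((0 : G), v - HL 0) = (0, v)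
      rw [map_zero, sub_zero]
end

section
/- For every q ∈ ℂ with q ≠ 0 and q ≠ 1, the q-deformed Witt superalgebra (W^q, [·,·]_σ, α) is a Hom-Lie superalgebra: the bracket is even and super skew-symmetric, and for all homogeneous x, y, z ∈ W^q the super Hom-Jacobi identity (−1)^{|x||z|}[α(x),[y,z]] + (−1)^{|z||y|}[α(z),[x,y]] + (−1)^{|y||x|}[α(y),[z,x]] = 0 holds. -/
/-- The `q`-number `{n} = (1 - qⁿ)/(1 - q)`. -/
noncomputable def qInt (q : ℂ) (n : ℤ) : ℂ := (1 - q ^ n) / (1 - q)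

/-- The grading of the `q`-deformed Witt superalgebra: even part spanned by the `L n`
(`= b (Sum.inl n)`), odd part spanned by the `G n` (`= b (Sum.inr n)`). -/
def wGr {W : Type*} [AddCommGroup W] [Module ℂ W] (b : Module.Basis (ℤ ⊕ ℤ) ℂ W) :
    ZMod 2 → Submodule ℂ W :=
  fun i => if i = 0 then Submodule.span ℂ (Set.range fun n : ℤ => b (Sum.inl n))
           else Submodule.span ℂ (Set.range fun n : ℤ => b (Sum.inr n))

open Submodule Set

theorem ZMod.two_cases (i : ZMod 2) : i = 0 ∨ i = 1 := by decide +revert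

section SpanInduction

variable {R M₁ M₂ M₃ N : Type*} [Semiring R] [AddCommMonoid M₁] [Module R M₁]
  [AddCommMonoid M₂] [Module R M₂] [AddCommMonoid M₃] [Module R M₃]
  [AddCommMonoid N] [Module R N] {p : Submodule R N} {s₁ : Set M₁} {s₂ : Set M₂} {s₃ : Set M₃}

theorem IsLinearMap.map_mem_of_mem_span {f : M₁ → N} (hf : IsLinearMap R f)
    (h : ∀ x ∈ s₁, f x ∈ p) {x : M₁} (hx : x ∈ span R s₁) : f x ∈ p :=
  span_le (p := p.comap hf.mk') |>.2 h hx

theorem map_mem_of_mem_span₂ {f : M₁ → M₂ → N} (hf₁ : ∀ y, IsLinearMap R (f · y))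
    (hf₂ : ∀ x, IsLinearMap R (f x)) (h : ∀ x ∈ s₁, ∀ y ∈ s₂, f x y ∈ p)
    {x : M₁} (hx : x ∈ span R s₁) {y : M₂} (hy : y ∈ span R s₂) : f x y ∈ p :=
  (hf₂ x).map_mem_of_mem_span
    (fun y hy => (hf₁ y).map_mem_of_mem_span (fun x hx => h x hx y hy) hx) hy

theorem map_mem_of_mem_span₃ {f : M₁ → M₂ → M₃ → N} (hf₁ : ∀ y z, IsLinearMap R (f · y z))
    (hf₂ : ∀ x z, IsLinearMap R (f x · z)) (hf₃ : ∀ x y, IsLinearMap R (f x y))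
    (h : ∀ x ∈ s₁, ∀ y ∈ s₂, ∀ z ∈ s₃, f x y z ∈ p) {x : M₁} (hx : x ∈ span R s₁)
    {y : M₂} (hy : y ∈ span R s₂) {z : M₃} (hz : z ∈ span R s₃) : f x y z ∈ p :=
  (hf₃ x y).map_mem_of_mem_span (fun z hz =>
    map_mem_of_mem_span₂ (hf₁ · z) (hf₂ · z) (fun x hx y hy => h x hx y hy z hz) hx hy) hz

end SpanInduction

section Diagonal

variable {K W Γ : Type*} [Field K] [AddCommGroup W] [Module K W]

variable (K) in
def paritySpan (e : ZMod 2 × Γ → W) (i : ZMod 2) : Submodule K W :=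
  span K (range fun a => e (i, a))

variable {e : ZMod 2 × Γ → W} (B : W →ₗ[K] W →ₗ[K] W) (α : W →ₗ[K] W)
  {c : ZMod 2 × Γ → ZMod 2 × Γ → K} {t : ZMod 2 × Γ → K}

theorem bracket_mem_paritySpan [AddCommMonoid Γ]
    (hB : ∀ x y, B (e x) (e y) = c x y • e (x + y)) (i j : ZMod 2) {x y : W}
    (hx : x ∈ paritySpan K e i) (hy : y ∈ paritySpan K e j) :
    B x y ∈ paritySpan K e (i + j) := by
  refine map_mem_of_mem_span₂ (f := fun x y => B x y) (fun y => (B.flip y).isLinear)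
    (fun x => (B x).isLinear) ?_ hx hy
  rintro _ ⟨a, rfl⟩ _ ⟨b, rfl⟩
  rw [hB]
  exact smul_mem _ _ (subset_span ⟨a + b, rfl⟩)

theorem map_mem_paritySpan (hα : ∀ x, α (e x) = t x • e x) (i : ZMod 2) {x : W}
    (hx : x ∈ paritySpan K e i) : α x ∈ paritySpan K e i := by
  refine α.isLinear.map_mem_of_mem_span ?_ hx
  rintro _ ⟨a, rfl⟩
  rw [hα]
  exact smul_mem _ _ (subset_span ⟨a, rfl⟩)

theorem bracket_eq_superSkew [AddCommMonoid Γ]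
    (hB : ∀ x y, B (e x) (e y) = c x y • e (x + y))
    (hc : ∀ x y, c x y = -(-1) ^ (x.1.val * y.1.val) * c y x) (i j : ZMod 2) {x y : W}
    (hx : x ∈ paritySpan K e i) (hy : y ∈ paritySpan K e j) :
    B x y = (-((-1 : K) ^ (i.val * j.val))) • B y x := by
  set s : K := -((-1 : K) ^ (i.val * j.val))
  rw [← sub_eq_zero, ← mem_bot K]
  refine map_mem_of_mem_span₂ (f := fun x y => B x y - s • B y x)
    (fun y => (B.flip y - s • B y).isLinear) (fun x => (B x - s • B.flip x).isLinear) ?_ hx hy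
  rintro _ ⟨a, rfl⟩ _ ⟨b, rfl⟩
  rw [mem_bot, hB, hB, hc (i, a), add_comm (j, b)]
  module

theorem superHomJacobi_eq_zero [AddCommMonoid Γ]
    (hB : ∀ x y, B (e x) (e y) = c x y • e (x + y)) (hα : ∀ x, α (e x) = t x • e x)
    (hc : ∀ x y z, (-1) ^ (x.1.val * z.1.val) * (t x * c y z * c x (y + z)) +
      (-1) ^ (z.1.val * y.1.val) * (t z * c x y * c z (x + y)) +
      (-1) ^ (y.1.val * x.1.val) * (t y * c z x * c y (z + x)) = 0)
    (i j l : ZMod 2) {x y z : W} (hx : x ∈ paritySpan K e i) (hy : y ∈ paritySpan K e j)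
    (hz : z ∈ paritySpan K e l) :
    ((-1 : K) ^ (i.val * l.val)) • B (α x) (B y z) +
      ((-1 : K) ^ (l.val * j.val)) • B (α z) (B x y) +
      ((-1 : K) ^ (j.val * i.val)) • B (α y) (B z x) = 0 := by
  rw [← mem_bot K]
  refine map_mem_of_mem_span₃
    (f := fun x y z => ((-1 : K) ^ (i.val * l.val)) • B (α x) (B y z) +
      ((-1 : K) ^ (l.val * j.val)) • B (α z) (B x y) +
      ((-1 : K) ^ (j.val * i.val)) • B (α y) (B z x))
    (fun _ _ => ?_) (fun _ _ => ?_) (fun _ _ => ?_) ?_ hx hy hz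
  iterate 3
    constructor <;> intros <;>
      simp only [map_add, map_smul, LinearMap.add_apply, LinearMap.smul_apply] <;> module
  rintro _ ⟨a, rfl⟩ _ ⟨b, rfl⟩ _ ⟨d, rfl⟩
  simp only [mem_bot, hα, hB, map_smul, LinearMap.smul_apply, smul_smul]
  rw [show (l, d) + ((i, a) + (j, b)) = (i, a) + ((j, b) + (l, d)) by abel,
    show (j, b) + ((l, d) + (i, a)) = (i, a) + ((j, b) + (l, d)) by abel]
  linear_combination (norm := module) hc (i, a) (j, b) (l, d) • e ((i, a) + ((j, b) + (l, d)))

theorem isHomLieSuper_of_diagonal [AddCommMonoid Γ]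
    (hB : ∀ x y, B (e x) (e y) = c x y • e (x + y)) (hα : ∀ x, α (e x) = t x • e x)
    (hc_skew : ∀ x y, c x y = -(-1) ^ (x.1.val * y.1.val) * c y x)
    (hc_jacobi : ∀ x y z, (-1) ^ (x.1.val * z.1.val) * (t x * c y z * c x (y + z)) +
      (-1) ^ (z.1.val * y.1.val) * (t z * c x y * c z (x + y)) +
      (-1) ^ (y.1.val * x.1.val) * (t y * c z x * c y (z + x)) = 0) :
    IsHomLieSuper (paritySpan K e) (fun x y => B x y) α :=
  ⟨α.isLinear, fun x => (B x).isLinear, fun y => (B.flip y).isLinear,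
    fun i j _ hx _ hy => bracket_mem_paritySpan B hB i j hx hy,
    fun i _ hx => map_mem_paritySpan α hα i hx,
    fun i j _ hx _ hy => bracket_eq_superSkew B hB hc_skew i j hx hy,
    fun i j l _ hx _ hy _ hz => superHomJacobi_eq_zero B α hB hα hc_jacobi i j l hx hy hz⟩

end Diagonal

section QWitt

theorem qInt_hom_jacobi {q : ℂ} (hq : q ≠ 0) (a b c : ℤ) :
    (1 + q ^ a) * ((qInt q c - qInt q b) * (qInt q (b + c) - qInt q a)) +
      (1 + q ^ c) * ((qInt q b - qInt q a) * (qInt q (a + b) - qInt q c)) +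
      (1 + q ^ b) * ((qInt q a - qInt q c) * (qInt q (c + a) - qInt q b)) = 0 := by
  simp only [qInt, zpow_add₀ hq]
  ring

noncomputable def qWittCoeff (q : ℂ) (x y : ZMod 2 × ℤ) : ℂ :=
  if x.1 = 1 ∧ y.1 = 1 then 0 else qInt q y.2 - qInt q x.2

theorem qWittCoeff_skew (q : ℂ) (x y : ZMod 2 × ℤ) :
    qWittCoeff q x y = -(-1) ^ (x.1.val * y.1.val) * qWittCoeff q y x := by
  obtain ⟨i, m⟩ := x
  obtain ⟨j, n⟩ := y
  rcases i.two_cases with rfl | rfl <;> rcases j.two_cases with rfl | rfl <;>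
    simp +decide [qWittCoeff]

theorem qWittCoeff_jacobi {q : ℂ} (hq : q ≠ 0) (x y z : ZMod 2 × ℤ) :
    (-1) ^ (x.1.val * z.1.val) * ((1 + q ^ x.2) * qWittCoeff q y z * qWittCoeff q x (y + z)) +
      (-1) ^ (z.1.val * y.1.val) * ((1 + q ^ z.2) * qWittCoeff q x y * qWittCoeff q z (x + y)) +
      (-1) ^ (y.1.val * x.1.val) * ((1 + q ^ y.2) * qWittCoeff q z x * qWittCoeff q y (z + x))
      = 0 := by
  obtain ⟨i, a⟩ := x
  obtain ⟨j, b⟩ := y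
  obtain ⟨l, c⟩ := z
  rcases i.two_cases with rfl | rfl <;> rcases j.two_cases with rfl | rfl <;>
    rcases l.two_cases with rfl | rfl <;> simp +decide [qWittCoeff] <;>
    linear_combination qInt_hom_jacobi hq a b c

variable {W : Type*} [AddCommGroup W] [Module ℂ W] {q : ℂ} {b : Module.Basis (ℤ ⊕ ℤ) ℂ W}

/-- The shift `G n ↦ e (1, n + 1)` makes the bracket additive in degrees. -/
noncomputable def qWittVec (b : Module.Basis (ℤ ⊕ ℤ) ℂ W) (x : ZMod 2 × ℤ) : W :=
  if x.1 = 0 then b (.inl x.2) else b (.inr (x.2 - 1))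

theorem wGr_eq_paritySpan (b : Module.Basis (ℤ ⊕ ℤ) ℂ W) :
    wGr b = paritySpan ℂ (qWittVec b) := by
  funext i
  rcases i.two_cases with rfl | rfl <;>
    simp only [wGr, paritySpan, qWittVec, one_ne_zero, ↓reduceIte]
  exact congrArg _ ((Equiv.subRight 1).surjective.range_comp _).symm

theorem qWittVec_bracket {br : W → W → W}
    (hLL : ∀ n m : ℤ, br (b (.inl n)) (b (.inl m)) = (qInt q m - qInt q n) • b (.inl (n + m)))
    (hLG : ∀ n m : ℤ, br (b (.inl n)) (b (.inr m)) =
        (qInt q (m + 1) - qInt q n) • b (.inr (n + m)))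
    (hGL : ∀ n m : ℤ, br (b (.inr m)) (b (.inl n)) =
        -((qInt q (m + 1) - qInt q n) • b (.inr (n + m))))
    (hGG : ∀ n m : ℤ, br (b (.inr n)) (b (.inr m)) = 0) (x y : ZMod 2 × ℤ) :
    br (qWittVec b x) (qWittVec b y) = qWittCoeff q x y • qWittVec b (x + y) := by
  obtain ⟨i, m⟩ := x
  obtain ⟨j, n⟩ := y
  rcases i.two_cases with rfl | rfl <;> rcases j.two_cases with rfl | rfl <;>
    simp +decide [qWittVec, qWittCoeff, hLL, hLG, hGL, hGG, ← add_sub_assoc, ← neg_smul,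
      add_comm n, sub_add_eq_add_sub]

theorem qWittVec_twist {α : W → W}
    (hαL : ∀ n : ℤ, α (b (.inl n)) = (1 + q ^ n) • b (.inl n))
    (hαG : ∀ n : ℤ, α (b (.inr n)) = (1 + q ^ (n + 1)) • b (.inr n)) (x : ZMod 2 × ℤ) :
    α (qWittVec b x) = (1 + q ^ x.2) • qWittVec b x := by
  obtain ⟨i, m⟩ := x
  rcases i.two_cases with rfl | rfl <;> simp +decide [qWittVec, hαL, hαG]

end QWitt

theorem qWitt_isHomLieSuper_general
    (q : ℂ) (hq0 : q ≠ 0)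
    (W : Type*) [AddCommGroup W] [Module ℂ W] (b : Module.Basis (ℤ ⊕ ℤ) ℂ W)
    (br : W → W → W)
    (hbr1 : ∀ x, IsLinearMap ℂ (br x)) (hbr2 : ∀ y, IsLinearMap ℂ fun x => br x y)
    (α : W → W) (hα : IsLinearMap ℂ α)
    (hLL : ∀ n m : ℤ, br (b (Sum.inl n)) (b (Sum.inl m)) =
        (qInt q m - qInt q n) • b (Sum.inl (n + m)))
    (hLG : ∀ n m : ℤ, br (b (Sum.inl n)) (b (Sum.inr m)) =
        (qInt q (m + 1) - qInt q n) • b (Sum.inr (n + m)))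
    (hGL : ∀ n m : ℤ, br (b (Sum.inr m)) (b (Sum.inl n)) =
        -((qInt q (m + 1) - qInt q n) • b (Sum.inr (n + m))))
    (hGG : ∀ n m : ℤ, br (b (Sum.inr n)) (b (Sum.inr m)) = 0)
    (hαL : ∀ n : ℤ, α (b (Sum.inl n)) = (1 + q ^ n) • b (Sum.inl n))
    (hαG : ∀ n : ℤ, α (b (Sum.inr n)) = (1 + q ^ (n + 1)) • b (Sum.inr n)) :
    IsHomLieSuper (wGr b) br α := by
  let B : W →ₗ[ℂ] W →ₗ[ℂ] W := LinearMap.mk₂ ℂ br (fun x y z => (hbr2 z).map_add x y)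
    (fun c x y => (hbr2 y).map_smul c x) (fun x => (hbr1 x).map_add)
    (fun c x => (hbr1 x).map_smul c)
  rw [wGr_eq_paritySpan]
  exact isHomLieSuper_of_diagonal B hα.mk' (qWittVec_bracket hLL hLG hGL hGG)
    (qWittVec_twist hαL hαG) (qWittCoeff_skew q) (qWittCoeff_jacobi hq0)

/-- For every `q ∈ ℂ`, `q ≠ 0`, `q ≠ 1`, the `q`-deformed Witt
superalgebra `(W^q, [·,·]_σ, α)` is a Hom-Lie superalgebra. -/
theorem qWitt_isHomLieSuper
    (q : ℂ) (hq0 : q ≠ 0) (hq1 : q ≠ 1)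
    (W : Type*) [AddCommGroup W] [Module ℂ W] (b : Module.Basis (ℤ ⊕ ℤ) ℂ W)
    (br : W → W → W)
    (hbr1 : ∀ x, IsLinearMap ℂ (br x)) (hbr2 : ∀ y, IsLinearMap ℂ fun x => br x y)
    (α : W → W) (hα : IsLinearMap ℂ α)
    (hLL : ∀ n m : ℤ, br (b (Sum.inl n)) (b (Sum.inl m)) =
        (qInt q m - qInt q n) • b (Sum.inl (n + m)))
    (hLG : ∀ n m : ℤ, br (b (Sum.inl n)) (b (Sum.inr m)) =
        (qInt q (m + 1) - qInt q n) • b (Sum.inr (n + m)))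
    (hGL : ∀ n m : ℤ, br (b (Sum.inr m)) (b (Sum.inl n)) =
        -((qInt q (m + 1) - qInt q n) • b (Sum.inr (n + m))))
    (hGG : ∀ n m : ℤ, br (b (Sum.inr n)) (b (Sum.inr m)) = 0)
    (hαL : ∀ n : ℤ, α (b (Sum.inl n)) = (1 + q ^ n) • b (Sum.inl n))
    (hαG : ∀ n : ℤ, α (b (Sum.inr n)) = (1 + q ^ (n + 1)) • b (Sum.inr n)) :
    IsHomLieSuper (wGr b) br α :=
  qWitt_isHomLieSuper_general q hq0 W b br hbr1 hbr2 α hα hLL hLG hGL hGG hαL hαG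
end

section
/- Let q be a real number with q > 0 and q ≠ 1, and let D : W^q → W^q be a homogeneous α¹-derivation of degree s ∈ ℤ, i.e. D is linear, α∘D = D∘α, D([x,y]) = [D(x),α(y)] + (−1)^{|x||D|}[α(x),D(y)] for all homogeneous x,y, and D maps span{L_n, G_n} into span{L_{n+s}, G_{n+s}} for every n ∈ ℤ. Then D = 0. -/
/-!
`α` scales `L n` and `G n` by `1 + qⁿ` and `1 + qⁿ⁺¹`, and `n ↦ qⁿ` is injective for real
`q > 0`, `q ≠ 1`; so a map commuting with `α` preserves this weight:
`D (L n) = a n • L n + c n • G (n - 1)` and `D (G n) = d n • L (n + 1) + e n • G n`.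
The bracket of basis vectors of weights `w ≠ w'` is `{w'} - {w} ≠ 0` times a basis vector, so the
Leibniz rule on `[L n, L m]` gives `f (n + m) = (1 + qᵐ) f n + (1 + qⁿ) f m` for `f = a, c`,
which forces `f = 0`. Then `D (L n) = 0`, and the Leibniz rule on `[L n, G m]` gives
`g (n + m) = (1 + qⁿ) g m` for `g = d, e`; at `n = 0` this reads `g m = 2 g m`.
-/

theorem qInt_injective {q : ℂ} (hq : q ≠ 1) (hinj : Function.Injective (q ^ · : ℤ → ℂ)) :
    Function.Injective (qInt q) := by
  intro m n h
  apply hinj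
  have h1 : (1 : ℂ) - q ≠ 0 := sub_ne_zero.mpr hq.symm
  simpa [qInt, div_left_inj' h1] using h

theorem Complex.zpow_right_injective_ofReal {q : ℝ} (hq0 : 0 < q) (hq1 : q ≠ 1) :
    Function.Injective ((q : ℂ) ^ · : ℤ → ℂ) := fun m n h =>
  zpow_right_injective₀ hq0 hq1 <| Complex.ofReal_injective <| by simpa using h

theorem eq_zero_of_twisted_leibniz {K : Type*} [Field K] {q : K}
    (hq : (1 + q) * (1 + q + q ^ 2) ≠ 0) {f : ℤ → K}
    (h : ∀ n m : ℤ, m ≠ n → f (n + m) = f n * (1 + q ^ m) + f m * (1 + q ^ n)) (n : ℤ) :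
    f n = 0 := by
  have hf : ∀ m : ℤ, m ≠ 0 → f m = -(f 0 * (1 + q ^ m)) := fun m hm => by
    linear_combination -(by simpa using h 0 m hm : f m = _)
  have hf0 : f 0 = 0 := by
    have h3 := h 1 2 (by decide)
    rw [hf 1 one_ne_zero, hf 2 two_ne_zero, show (1 + 2 : ℤ) = 3 by norm_num,
      hf 3 three_ne_zero] at h3
    simp only [zpow_ofNat] at h3
    -- `2 (1 + q) (1 + q²) - (1 + q³) = (1 + q) (1 + q + q²)`
    refine (mul_eq_zero.mp ?_).resolve_right hq
    linear_combination h3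
  obtain rfl | hn := eq_or_ne n 0
  · exact hf0
  · rw [hf n hn, hf0, zero_mul, neg_zero]

theorem eq_zero_of_twisted_shift {K : Type*} [Field K] {q : K} {g : ℤ → K}
    (h : ∀ n m : ℤ, n ≠ m + 1 → g (n + m) = (1 + q ^ n) * g m) (n : ℤ) : g n = 0 := by
  have hg : ∀ m : ℤ, m ≠ -1 → g m = 0 := fun m hm => by
    linear_combination -(by simpa using h 0 m (by omega) : g m = _)
  obtain rfl | hn := eq_or_ne n (-1)
  · simpa [hg (-2) (by decide)] using h 1 (-2) (by decide)
  · exact hg n hn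

namespace Module.Basis

variable {ι R M : Type*} [CommRing R] [AddCommGroup M] [Module R M] (b : Basis ι R M)

theorem eq_of_smul_add_smul_eq {i j : ι} (hij : i ≠ j) {x y x' y' : R}
    (h : x • b i + y • b j = x' • b i + y' • b j) : x = x' ∧ y = y' := by
  classical
  constructor
  · simpa [hij.symm] using congr_arg (b.repr · i) h
  · simpa [hij] using congr_arg (b.repr · j) h

theorem eq_repr_smul_add_repr_smul {v : M} {i j : ι} (hij : i ≠ j)
    (h : ∀ k, k ≠ i → k ≠ j → b.repr v k = 0) :
    v = b.repr v i • b i + b.repr v j • b j := by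
  classical
  refine b.repr.injective (Finsupp.ext fun k => ?_)
  by_cases hki : k = i
  · subst hki; simp [hij.symm]
  by_cases hkj : k = j
  · subst hkj; simp [hij]
  simp [h k hki hkj, Ne.symm hki, Ne.symm hkj]

theorem repr_apply_eq_zero_of_commute [NoZeroDivisors R] {α D : M →ₗ[R] M} (μ : ι → R)
    (hα : ∀ i, α (b i) = μ i • b i) (hcomm : Commute α D) {i j : ι} (hij : μ i ≠ μ j) :
    b.repr (D (b i)) j = 0 := by
  have hcoord : (b.coord j).comp α = μ j • b.coord j := b.ext fun k => by
    obtain rfl | hk := eq_or_ne k j <;> simp [*]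
  have h : μ j * b.repr (D (b i)) j = μ i * b.repr (D (b i)) j :=
    calc μ j * b.repr (D (b i)) j = (b.coord j).comp α (D (b i)) := by rw [hcoord]; rfl
      _ = b.coord j (D (α (b i))) := congr_arg (b.coord j) (LinearMap.congr_fun hcomm.eq (b i))
      _ = μ i * b.repr (D (b i)) j := by simp [hα]
  have h' : (μ j - μ i) * b.repr (D (b i)) j = 0 := by rw [sub_mul, h, sub_self]
  exact (mul_eq_zero.mp h').resolve_left (sub_ne_zero.mpr hij.symm)

end Module.Basis

section QWitt

open Sum

variable {W : Type*} [AddCommGroup W] [Module ℂ W] (b : Module.Basis (ℤ ⊕ ℤ) ℂ W) {q : ℂ}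

def qWittWeight : ℤ ⊕ ℤ → ℤ := Sum.elim id (· + 1)

theorem basis_inl_mem_wGr (n : ℤ) : b (inl n) ∈ wGr b 0 := by
  simpa [wGr] using Submodule.subset_span (Set.mem_range_self n)

theorem basis_inr_mem_wGr (n : ℤ) : b (inr n) ∈ wGr b 1 := by
  simpa [wGr] using Submodule.subset_span (Set.mem_range_self n)

theorem qWitt_apply_basis_eq (hinj : Function.Injective (q ^ · : ℤ → ℂ)) {α D : W →ₗ[ℂ] W}
    (hα : ∀ i, α (b i) = (1 + q ^ qWittWeight i) • b i) (hcomm : Commute α D) (i : ℤ ⊕ ℤ) :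
    D (b i) = b.repr (D (b i)) (inl (qWittWeight i)) • b (inl (qWittWeight i)) +
      b.repr (D (b i)) (inr (qWittWeight i - 1)) • b (inr (qWittWeight i - 1)) := by
  refine b.eq_repr_smul_add_repr_smul inl_ne_inr fun k hk₁ hk₂ => ?_
  refine b.repr_apply_eq_zero_of_commute _ hα hcomm fun h => ?_
  have hw := hinj (add_left_cancel h)
  cases k <;> simp [qWittWeight] at hw hk₁ hk₂ <;> omega

theorem qWitt_apply_inl_eq_zero (hq1 : q ≠ 1) (hinj : Function.Injective (q ^ · : ℤ → ℂ))
    (hq : (1 + q) * (1 + q + q ^ 2) ≠ 0) {B : W →ₗ[ℂ] W →ₗ[ℂ] W} {α D : W →ₗ[ℂ] W}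
    (hLL : ∀ n m : ℤ, B (b (inl n)) (b (inl m)) = (qInt q m - qInt q n) • b (inl (n + m)))
    (hLG : ∀ n m : ℤ, B (b (inl n)) (b (inr m)) =
        (qInt q (m + 1) - qInt q n) • b (inr (n + m)))
    (hGL : ∀ n m : ℤ, B (b (inr m)) (b (inl n)) =
        -((qInt q (m + 1) - qInt q n) • b (inr (n + m))))
    (hαL : ∀ n : ℤ, α (b (inl n)) = (1 + q ^ n) • b (inl n))
    (hleib : ∀ n m : ℤ, D (B (b (inl n)) (b (inl m))) =
        B (D (b (inl n))) (α (b (inl m))) + B (α (b (inl n))) (D (b (inl m))))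
    {a c : ℤ → ℂ} (hD : ∀ n, D (b (inl n)) = a n • b (inl n) + c n • b (inr (n - 1))) (n : ℤ) :
    D (b (inl n)) = 0 := by
  have key : ∀ n m : ℤ, m ≠ n →
      a (n + m) = a n * (1 + q ^ m) + a m * (1 + q ^ n) ∧
      c (n + m) = c n * (1 + q ^ m) + c m * (1 + q ^ n) := by
    intro n m hmn
    have h := hleib n m
    simp only [hLL, map_smul, hD, hαL, map_add, LinearMap.add_apply, LinearMap.smul_apply,
      hLG, hGL, sub_add_cancel] at h
    rw [show m + (n - 1) = n + m - 1 by ring, show n + (m - 1) = n + m - 1 by ring] at h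
    have hne : qInt q m - qInt q n ≠ 0 := sub_ne_zero.mpr ((qInt_injective hq1 hinj).ne hmn)
    obtain ⟨ha, hc⟩ := b.eq_of_smul_add_smul_eq inl_ne_inr
      (i := inl (n + m)) (j := inr (n + m - 1))
      (x := (qInt q m - qInt q n) * a (n + m)) (y := (qInt q m - qInt q n) * c (n + m))
      (x' := (qInt q m - qInt q n) * (a n * (1 + q ^ m) + a m * (1 + q ^ n)))
      (y' := (qInt q m - qInt q n) * (c n * (1 + q ^ m) + c m * (1 + q ^ n)))
      (by linear_combination (norm := module) h)
    exact ⟨mul_left_cancel₀ hne ha, mul_left_cancel₀ hne hc⟩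
  rw [hD, eq_zero_of_twisted_leibniz hq (fun n m h => (key n m h).1),
    eq_zero_of_twisted_leibniz hq (fun n m h => (key n m h).2), zero_smul, zero_smul, add_zero]

theorem qWitt_apply_inr_eq_zero (hq1 : q ≠ 1) (hinj : Function.Injective (q ^ · : ℤ → ℂ))
    {B : W →ₗ[ℂ] W →ₗ[ℂ] W} {α D : W →ₗ[ℂ] W}
    (hLL : ∀ n m : ℤ, B (b (inl n)) (b (inl m)) = (qInt q m - qInt q n) • b (inl (n + m)))
    (hLG : ∀ n m : ℤ, B (b (inl n)) (b (inr m)) =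
        (qInt q (m + 1) - qInt q n) • b (inr (n + m)))
    (hαL : ∀ n : ℤ, α (b (inl n)) = (1 + q ^ n) • b (inl n))
    (hleib : ∀ n m : ℤ, D (B (b (inl n)) (b (inr m))) =
        B (D (b (inl n))) (α (b (inr m))) + B (α (b (inl n))) (D (b (inr m))))
    (hDL : ∀ n, D (b (inl n)) = 0)
    {d e : ℤ → ℂ} (hD : ∀ n, D (b (inr n)) = d n • b (inl (n + 1)) + e n • b (inr n)) (n : ℤ) :
    D (b (inr n)) = 0 := by
  have key : ∀ n m : ℤ, n ≠ m + 1 →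
      d (n + m) = (1 + q ^ n) * d m ∧ e (n + m) = (1 + q ^ n) * e m := by
    intro n m hnm
    have h := hleib n m
    simp only [hLG, map_smul, hD, hDL, hαL, map_add, map_zero, LinearMap.zero_apply, zero_add,
      LinearMap.smul_apply, hLL, ← add_assoc] at h
    have hne : qInt q (m + 1) - qInt q n ≠ 0 :=
      sub_ne_zero.mpr ((qInt_injective hq1 hinj).ne hnm.symm)
    obtain ⟨hd, he⟩ := b.eq_of_smul_add_smul_eq inl_ne_inr
      (i := inl (n + m + 1)) (j := inr (n + m))
      (x := (qInt q (m + 1) - qInt q n) * d (n + m)) (y := (qInt q (m + 1) - qInt q n) * e (n + m))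
      (x' := (qInt q (m + 1) - qInt q n) * ((1 + q ^ n) * d m))
      (y' := (qInt q (m + 1) - qInt q n) * ((1 + q ^ n) * e m))
      (by linear_combination (norm := module) h)
    exact ⟨mul_left_cancel₀ hne hd, mul_left_cancel₀ hne he⟩
  rw [hD, eq_zero_of_twisted_shift (fun n m h => (key n m h).1),
    eq_zero_of_twisted_shift (fun n m h => (key n m h).2), zero_smul, zero_smul, add_zero]

end QWitt

theorem qWitt_alpha1_derivation_eq_zero_general
    (q : ℝ) (hq0 : 0 < q) (hq1 : q ≠ 1)
    (W : Type*) [AddCommGroup W] [Module ℂ W] (b : Module.Basis (ℤ ⊕ ℤ) ℂ W)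
    (br : W → W → W)
    (hbr1 : ∀ x, IsLinearMap ℂ (br x)) (hbr2 : ∀ y, IsLinearMap ℂ fun x => br x y)
    (α : W → W) (hα : IsLinearMap ℂ α)
    (hLL : ∀ n m : ℤ, br (b (Sum.inl n)) (b (Sum.inl m)) =
        (qInt q m - qInt q n) • b (Sum.inl (n + m)))
    (hLG : ∀ n m : ℤ, br (b (Sum.inl n)) (b (Sum.inr m)) =
        (qInt q (m + 1) - qInt q n) • b (Sum.inr (n + m)))
    (hGL : ∀ n m : ℤ, br (b (Sum.inr m)) (b (Sum.inl n)) =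
        -((qInt q (m + 1) - qInt q n) • b (Sum.inr (n + m))))
    (hαL : ∀ n : ℤ, α (b (Sum.inl n)) = (1 + (q : ℂ) ^ n) • b (Sum.inl n))
    (hαG : ∀ n : ℤ, α (b (Sum.inr n)) = (1 + (q : ℂ) ^ (n + 1)) • b (Sum.inr n))
    -- D is a homogeneous α¹-derivation of parity p and degree s
    (D : W → W) (p : ZMod 2)
    (hD : IsLinearMap ℂ D)
    (hcomm : ∀ x, α (D x) = D (α x))
    (hleib : ∀ (i j : ZMod 2), ∀ x ∈ wGr b i, ∀ y ∈ wGr b j,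
        D (br x y) = br (D x) (α y) + ((-1 : ℂ) ^ (i.val * p.val)) • br (α x) (D y)) :
    ∀ x : W, D x = 0 := by
  let B : W →ₗ[ℂ] W →ₗ[ℂ] W := LinearMap.mk₂ ℂ br (fun x x' y => (hbr2 y).map_add x x')
    (fun c x y => (hbr2 y).map_smul c x) (fun x y y' => (hbr1 x).map_add y y')
    (fun c x y => (hbr1 x).map_smul c y)
  let A := hα.mk' α
  let D' := hD.mk' D
  have hinj := Complex.zpow_right_injective_ofReal hq0 hq1
  have hq1' : (q : ℂ) ≠ 1 := by exact_mod_cast hq1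
  have hq : (1 + (q : ℂ)) * (1 + q + q ^ 2) ≠ 0 := by
    exact_mod_cast (by positivity : (0 : ℝ) < (1 + q) * (1 + q + q ^ 2)).ne'
  have hA : ∀ i, A (b i) = (1 + (q : ℂ) ^ qWittWeight i) • b i := by
    rintro (n | n)
    exacts [hαL n, hαG n]
  have hDA : Commute A D' := LinearMap.ext hcomm
  have hDL : ∀ n, D' (b (Sum.inl n)) = 0 :=
    qWitt_apply_inl_eq_zero b hq1' hinj hq (B := B) (α := A) (D := D') hLL hLG hGL hαL
      (fun n m => by
        simpa [B, A, D'] using hleib 0 0 _ (basis_inl_mem_wGr b n) _ (basis_inl_mem_wGr b m))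
      (fun n => qWitt_apply_basis_eq b hinj hA hDA (Sum.inl n))
  have hDG : ∀ n, D' (b (Sum.inr n)) = 0 :=
    qWitt_apply_inr_eq_zero b hq1' hinj (B := B) (α := A) (D := D') hLL hLG hαL
      (fun n m => by
        simpa [B, A, D'] using hleib 0 1 _ (basis_inl_mem_wGr b n) _ (basis_inr_mem_wGr b m))
      hDL
      (fun n => by simpa [qWittWeight] using qWitt_apply_basis_eq b hinj hA hDA (Sum.inr n))
  have hD0 : D' = 0 := b.ext fun i => by cases i <;> simp [hDL, hDG]
  exact fun x => LinearMap.congr_fun hD0 x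

/-- For real `q > 0`, `q ≠ 1`: every homogeneous `α¹`-derivation of the
`q`-deformed Witt superalgebra `W^q` of degree `s` is zero. -/
theorem qWitt_alpha1_derivation_eq_zero
    (q : ℝ) (hq0 : 0 < q) (hq1 : q ≠ 1)
    (W : Type*) [AddCommGroup W] [Module ℂ W] (b : Module.Basis (ℤ ⊕ ℤ) ℂ W)
    (br : W → W → W)
    (hbr1 : ∀ x, IsLinearMap ℂ (br x)) (hbr2 : ∀ y, IsLinearMap ℂ fun x => br x y)
    (α : W → W) (hα : IsLinearMap ℂ α)
    (hLL : ∀ n m : ℤ, br (b (Sum.inl n)) (b (Sum.inl m)) =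
        (qInt q m - qInt q n) • b (Sum.inl (n + m)))
    (hLG : ∀ n m : ℤ, br (b (Sum.inl n)) (b (Sum.inr m)) =
        (qInt q (m + 1) - qInt q n) • b (Sum.inr (n + m)))
    (hGL : ∀ n m : ℤ, br (b (Sum.inr m)) (b (Sum.inl n)) =
        -((qInt q (m + 1) - qInt q n) • b (Sum.inr (n + m))))
    (hGG : ∀ n m : ℤ, br (b (Sum.inr n)) (b (Sum.inr m)) = 0)
    (hαL : ∀ n : ℤ, α (b (Sum.inl n)) = (1 + (q : ℂ) ^ n) • b (Sum.inl n))
    (hαG : ∀ n : ℤ, α (b (Sum.inr n)) = (1 + (q : ℂ) ^ (n + 1)) • b (Sum.inr n))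
    -- D is a homogeneous α¹-derivation of parity p and degree s
    (D : W → W) (p : ZMod 2) (s : ℤ)
    (hD : IsLinearMap ℂ D)
    (hcomm : ∀ x, α (D x) = D (α x))
    (hpar : ∀ i : ZMod 2, ∀ x ∈ wGr b i, D x ∈ wGr b (i + p))
    (hdegL : ∀ n : ℤ, D (b (Sum.inl n)) ∈
        Submodule.span ℂ {b (Sum.inl (n + s)), b (Sum.inr (n + s))})
    (hdegG : ∀ n : ℤ, D (b (Sum.inr n)) ∈
        Submodule.span ℂ {b (Sum.inl (n + s)), b (Sum.inr (n + s))})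
    (hleib : ∀ (i j : ZMod 2), ∀ x ∈ wGr b i, ∀ y ∈ wGr b j,
        D (br x y) = br (D x) (α y) + ((-1 : ℂ) ^ (i.val * p.val)) • br (α x) (D y)) :
    ∀ x : W, D x = 0 :=
  qWitt_alpha1_derivation_eq_zero_general q hq0 hq1 W b br hbr1 hbr2 α hα hLL hLG hGL hαL hαG D p hD
    hcomm hleib
end
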